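/- arXiv:1107.0235 — 9 statements merged into one kernel-verified Lean document; each statement's English description precedes it below -/
import Mathlib

section
/- Let G be a finite gradable simple graph and let f, f' be two gradations on G. Then f and f' are equivalent (i.e., f' can be obtained from f by a finite sequence of lowerings at top vertices and liftings at bottom vertices) if and only if f(v) − f'(v) is even for every vertex v of G. -/
/-!
Every step changes a single value by `2`, so the parity of `f - f'` is invariant. Conversely,
if `f - f'` is even and `f' v₀ < f v₀` somewhere, a vertex `v` maximising `f` among those with
`f' v < f v` is a top vertex of `f`: a neighbour `u` with `f u = f v + 1` would satisfy
`f' u ≤ f' v + 1 < f u`, as `f v - f' v ≥ 2`. Lowering there decreases `∑ |f - f'|`; when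
instead `f v₀ < f' v₀`, lower `f'` and use that steps are reversible.
-/

/-- A gradation on a simple graph: adjacent vertices have values differing by ±1. -/
def IsGradation {V : Type*} (G : SimpleGraph V) (f : V → ℤ) : Prop :=
  ∀ ⦃a b : V⦄, G.Adj a b → f a - f b = 1 ∨ f a - f b = -1

/-- A top vertex: every neighbor has value one less. -/
def IsTopVertex {V : Type*} (G : SimpleGraph V) (f : V → ℤ) (v : V) : Prop :=
  ∀ u : V, G.Adj v u → f u = f v - 1

/-- A bottom vertex: every neighbor has value one more. -/
def IsBottomVertex {V : Type*} (G : SimpleGraph V) (f : V → ℤ) (v : V) : Prop :=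
  ∀ u : V, G.Adj v u → f u = f v + 1

/-- One elementary step: a lowering at a top vertex or a lifting at a bottom vertex. -/
def GradStep {V : Type*} [DecidableEq V] (G : SimpleGraph V) (f f' : V → ℤ) : Prop :=
  (∃ v : V, IsTopVertex G f v ∧ f' = Function.update f v (f v - 2)) ∨
  (∃ v : V, IsBottomVertex G f v ∧ f' = Function.update f v (f v + 2))

open Function Relation

section Gradation

variable {V : Type*} {G : SimpleGraph V}

theorem IsGradation.update_of_isTopVertex [DecidableEq V] {f : V → ℤ} (hf : IsGradation G f)
    {v : V} (hv : IsTopVertex G f v) : IsGradation G (update f v (f v - 2)) := by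
  intro a b hab
  rcases eq_or_ne a v with rfl | ha
  · rw [update_self, update_of_ne hab.ne.symm, hv b hab]
    right; ring
  rcases eq_or_ne b v with rfl | hb
  · rw [update_self, update_of_ne ha, hv a hab.symm]
    left; ring
  · rw [update_of_ne ha, update_of_ne hb]
    exact hf hab

theorem IsTopVertex.isBottomVertex_update [DecidableEq V] {f : V → ℤ} {v : V}
    (hv : IsTopVertex G f v) : IsBottomVertex G (update f v (f v - 2)) v := by
  intro u hu
  rw [update_self, update_of_ne hu.ne.symm, hv u hu]
  ring

theorem IsBottomVertex.isTopVertex_update [DecidableEq V] {f : V → ℤ} {v : V}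
    (hv : IsBottomVertex G f v) : IsTopVertex G (update f v (f v + 2)) v := by
  intro u hu
  rw [update_self, update_of_ne hu.ne.symm, hv u hu]
  ring

theorem GradStep.symm [DecidableEq V] {f g : V → ℤ} (h : GradStep G f g) : GradStep G g f := by
  rcases h with ⟨v, hv, rfl⟩ | ⟨v, hv, rfl⟩
  · exact .inr ⟨v, hv.isBottomVertex_update, by simp⟩
  · exact .inl ⟨v, hv.isTopVertex_update, by simp⟩

theorem GradStep.even_sub [DecidableEq V] {f g : V → ℤ} (h : GradStep G f g) (u : V) :
    Even (f u - g u) := by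
  rcases h with ⟨v, -, rfl⟩ | ⟨v, -, rfl⟩ <;> rcases eq_or_ne u v with rfl | hu <;> simp [*]

theorem Relation.ReflTransGen.even_sub_of_gradStep [DecidableEq V] {f g : V → ℤ}
    (h : ReflTransGen (GradStep G) f g) (u : V) : Even (f u - g u) := by
  induction h with
  | refl => simp
  | tail _ hstep ih => simpa using ih.add (hstep.even_sub u)

theorem IsGradation.exists_isTopVertex_of_lt [Fintype V] {f f' : V → ℤ} (hf : IsGradation G f)
    (hf' : IsGradation G f') (heven : ∀ v, Even (f v - f' v)) {v₀ : V} (hv₀ : f' v₀ < f v₀) :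
    ∃ v, IsTopVertex G f v ∧ f' v < f v := by
  classical
  obtain ⟨v, hv, hmax⟩ := (Finset.univ.filter fun v => f' v < f v).exists_max_image f
    ⟨v₀, by simpa using hv₀⟩
  rw [Finset.mem_filter] at hv
  refine ⟨v, fun u hu => ?_, hv.2⟩
  obtain ⟨k, hk⟩ := heven v
  have hu_le : f' u < f u → f u ≤ f v := fun h => hmax u (by simpa using h)
  rcases hf hu, hf' hu with ⟨h | h, h' | h'⟩ <;> omega

end Gradation

section Distance

variable {V : Type*} [Fintype V]

def l1Dist (f g : V → ℤ) : ℕ := ∑ v, (f v - g v).natAbs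

theorem l1Dist_comm (f g : V → ℤ) : l1Dist f g = l1Dist g f :=
  Finset.sum_congr rfl fun v _ => by rw [← Int.natAbs_neg, neg_sub]

theorem l1Dist_update_lt [DecidableEq V] {f g : V → ℤ} {v : V} (hv : g v + 1 < f v) :
    l1Dist (update f v (f v - 2)) g < l1Dist f g := by
  refine Finset.sum_lt_sum (fun u _ => ?_) ⟨v, Finset.mem_univ v, ?_⟩
  · rcases eq_or_ne u v with rfl | hu
    · rw [update_self]; omega
    · rw [update_of_ne hu]
  · rw [update_self]; omega

end Distance

section Reachability

variable {V : Type*} [Fintype V] [DecidableEq V] {G : SimpleGraph V} {f f' : V → ℤ}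

theorem IsGradation.exists_gradStep_l1Dist_lt (hf : IsGradation G f) (hf' : IsGradation G f')
    (heven : ∀ v, Even (f v - f' v)) {v₀ : V} (hv₀ : f' v₀ < f v₀) :
    ∃ g, GradStep G f g ∧ IsGradation G g ∧ (∀ v, Even (g v - f' v)) ∧
      l1Dist g f' < l1Dist f f' := by
  obtain ⟨v, htop, hv⟩ := hf.exists_isTopVertex_of_lt hf' heven hv₀
  have hstep : GradStep G f (update f v (f v - 2)) := .inl ⟨v, htop, rfl⟩
  obtain ⟨k, hk⟩ := heven v
  refine ⟨_, hstep, hf.update_of_isTopVertex htop, fun u => ?_, l1Dist_update_lt (by omega)⟩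
  simpa using (hstep.symm.even_sub u).add (heven u)

theorem reflTransGen_gradStep_of_even (hf : IsGradation G f) (hf' : IsGradation G f')
    (heven : ∀ v, Even (f v - f' v)) : ReflTransGen (GradStep G) f f' := by
  induction hn : l1Dist f f' using Nat.strong_induction_on generalizing f f' with
  | _ n ih =>
  subst hn
  obtain rfl | hne := eq_or_ne f f'
  · exact .refl
  obtain ⟨v₀, hv₀⟩ := ne_iff.mp hne
  rcases hv₀.lt_or_gt with hlt | hgt
  · have heven_swap : ∀ v, Even (f' v - f v) := fun v => by simpa using (heven v).neg
    obtain ⟨g, hstep, hg, hgeven, hdist⟩ := hf'.exists_gradStep_l1Dist_lt hf heven_swap hlt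
    rw [l1Dist_comm g, l1Dist_comm f'] at hdist
    have hfg : ∀ v, Even (f v - g v) := fun v => by simpa using (hgeven v).neg
    exact (ih _ hdist hf hg hfg rfl).tail hstep.symm
  · obtain ⟨g, hstep, hg, hgeven, hdist⟩ := hf.exists_gradStep_l1Dist_lt hf' heven hgt
    exact .head hstep (ih _ hdist hg hf' hgeven rfl)

end Reachability

/-- Two gradations on a finite gradable graph are equivalent (one is obtained from the
other by a finite composite of lowerings and liftings) iff their difference is even at
every vertex. -/
theorem gradations_equivalent_iff_even_difference
    {V : Type*} [Fintype V] [DecidableEq V] (G : SimpleGraph V)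
    (f f' : V → ℤ) (hf : IsGradation G f) (hf' : IsGradation G f') :
    Relation.ReflTransGen (GradStep G) f f' ↔ ∀ v : V, Even (f v - f' v) :=
  ⟨ReflTransGen.even_sub_of_gradStep, reflTransGen_gradStep_of_even hf hf'⟩
end

section
/- Let (G,f) be a finite connected graded graph having exactly one bottom vertex v. Then for every vertex u of G, the graph distance satisfies d(u,v) = f(u) − f(v). Dually, if (G,f) has exactly one top vertex v, then d(u,v) = f(v) − f(u) for every vertex u. -/
lemma grad_walk_bound {V : Type*} {G : SimpleGraph V} {f : V → ℤ}
    (hg : IsGradation G f) {u v : V} (p : G.Walk u v) :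
    |f u - f v| ≤ (p.length : ℤ) := by
  induction p with
  | nil => simp
  | cons h p ih =>
    rename_i x y z
    have h1 : |f x - f y| = 1 := by rcases hg h with h' | h' <;> rw [h'] <;> norm_num
    have h2 := abs_sub_le (f x) (f y) (f z)
    simp only [SimpleGraph.Walk.length_cons]
    push_cast
    linarith

lemma bottom_case {V : Type*} [Fintype V] (G : SimpleGraph V) (f : V → ℤ)
    (hconn : G.Connected) (hg : IsGradation G f)
    (v : V) (hv : IsBottomVertex G f v)
    (huniq : ∀ u : V, IsBottomVertex G f u → u = v)
    (u : V) : (G.dist u v : ℤ) = f u - f v := by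
  have hne : Nonempty V := hconn.nonempty
  -- f v is the minimum value of f
  have hmin : ∀ w : V, f v ≤ f w := by
    obtain ⟨m, -, hm⟩ := Finset.exists_min_image Finset.univ f ⟨v, Finset.mem_univ v⟩
    have hmb : IsBottomVertex G f m := by
      intro w hw
      rcases hg hw with h1 | h1
      · have := hm w (Finset.mem_univ w); omega
      · omega
    have := huniq m hmb
    subst this
    intro w; exact hm w (Finset.mem_univ w)
  -- main induction
  have key : ∀ n : ℕ, ∀ u : V, f u - f v = n → G.dist u v = n := by
    intro n
    induction n with
    | zero =>
      intro u hu
      have : u = v := by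
        by_contra hne'
        have hub : ¬ IsBottomVertex G f u := fun hb => hne' (huniq u hb)
        simp only [IsBottomVertex, not_forall] at hub
        obtain ⟨w, hw, hwne⟩ := hub
        rcases hg hw with h1 | h1
        · have := hmin w; omega
        · omega
      subst this; simp
    | succ n ih =>
      intro u hu
      have hne' : u ≠ v := by intro h; subst h; omega
      have hub : ¬ IsBottomVertex G f u := fun hb => hne' (huniq u hb)
      simp only [IsBottomVertex, not_forall] at hub
      obtain ⟨w, hw, hwne⟩ := hub
      have hfw : f w = f u - 1 := by rcases hg hw with h1 | h1 <;> omega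
      have hdw : G.dist w v = n := ih w (by omega)
      have hle : G.dist u v ≤ n + 1 := by
        have t := hconn.dist_triangle (u := u) (v := w) (w := v)
        have h1 : G.dist u w ≤ 1 := by
          have := SimpleGraph.dist_le hw.toWalk
          simpa using this
        omega
      have hge : (n + 1 : ℤ) ≤ G.dist u v := by
        obtain ⟨p, hp⟩ := hconn.exists_walk_length_eq_dist u v
        have := grad_walk_bound hg p
        rw [hp] at this
        have habs : |f u - f v| = (n : ℤ) + 1 := by rw [hu]; push_cast; rw [abs_of_nonneg]; omega
        omega
      omega
  have hnn : 0 ≤ f u - f v := by have := hmin u; omega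
  have := key (f u - f v).toNat u (by omega)
  rw [this]; omega

/-- In a finite connected graded graph with a unique bottom vertex `v`, the distance to `v`
equals the gradation difference `f u - f v`; dually for a unique top vertex. -/
theorem dist_eq_grade_of_unique_extremum
    {V : Type*} [Fintype V] (G : SimpleGraph V) (f : V → ℤ)
    (hconn : G.Connected) (hgrad : IsGradation G f) :
    (∀ v : V, IsBottomVertex G f v → (∀ u : V, IsBottomVertex G f u → u = v) →
      ∀ u : V, (G.dist u v : ℤ) = f u - f v) ∧
    (∀ v : V, IsTopVertex G f v → (∀ u : V, IsTopVertex G f u → u = v) →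
      ∀ u : V, (G.dist u v : ℤ) = f v - f u) := by
  constructor
  · exact fun v hv huniq u => bottom_case G f hconn hgrad v hv huniq u
  · intro v hv huniq u
    set g : V → ℤ := fun x => -f x with hgdef
    have hg' : IsGradation G g := by
      intro a b hab
      rcases hgrad hab with h1 | h1 <;> simp [hgdef] <;> omega
    have hbt : ∀ x : V, IsTopVertex G f x ↔ IsBottomVertex G g x := by
      intro x
      constructor
      · intro h w hw; have := h w hw; simp [hgdef]; omega
      · intro h w hw; have := h w hw; simp [hgdef] at this; omega
    have := bottom_case G g hconn hg' v ((hbt v).mp hv)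
      (fun w hw => huniq w ((hbt w).mpr hw)) u
    simp [hgdef] at this
    omega
end

section
/- Let (G,f,ν) be a chain graph with G connected and having more than one vertex, let g be a representation gradation of G with distance components G₁ = g⁻¹(0) and G₂ = g⁻¹(1), and let A = (ν(v,w))_{v∈G₁, w∈G₂} be the corresponding representation matrix over ℤ. Then Σ_{k∈ℤ} rank H_k = Σ_{k∈ℤ} rank H^k = |G₁| + |G₂| − 2·rank(A), where H_k and H^k are the homology and cohomology groups of the complexes associated to (G,f,ν), rank H denotes the rank of the free part of the finitely generated abelian group H, and rank(A) is the rank of the integer matrix A. -/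
/-- A connection on a graph: a symmetric integer function nonzero exactly on edges. -/
def IsConnection {V : Type*} (G : SimpleGraph V) (ν : V → V → ℤ) : Prop :=
  (∀ a b : V, ν a b = ν b a) ∧ ∀ a b : V, ν a b ≠ 0 ↔ G.Adj a b

/-- A chain graph: a gradation together with a connection that satisfies the chain
condition `∑_{f c = f a + 1} ν a c * ν c b = 0` whenever `f b = f a + 2`. -/
def IsChainGraph {V : Type*} [Fintype V] (G : SimpleGraph V) (f : V → ℤ)
    (ν : V → V → ℤ) : Prop :=
  IsGradation G f ∧ IsConnection G ν ∧
    ∀ a b : V, f b = f a + 2 →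
      (∑ c : V, if f c = f a + 1 then ν a c * ν c b else 0) = 0

/-- The linear map from the free abelian group on the level-`j` vertices to the free
abelian group on the level-`k` vertices, sending a vertex `v` to `∑_w ν v w • w`. -/
noncomputable def dmap {V : Type*} [Fintype V] [DecidableEq V]
    (f : V → ℤ) (ν : V → V → ℤ) (j k : ℤ) :
    ({v : V // f v = j} → ℤ) →ₗ[ℤ] ({v : V // f v = k} → ℤ) :=
  Matrix.toLin' (Matrix.of fun (w : {v : V // f v = k}) (v : {v : V // f v = j}) => ν v.1 w.1)

/-- The `k`-th homology group of the chain complex associated to `(f, ν)`: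
cycles at level `k` modulo (the intersection with) the boundaries from level `k+1`. -/
noncomputable abbrev Hk {V : Type*} [Fintype V] [DecidableEq V]
    (f : V → ℤ) (ν : V → V → ℤ) (k : ℤ) :=
  LinearMap.ker (dmap f ν k (k - 1)) ⧸
    ((LinearMap.range (dmap f ν (k + 1) k)).comap
      (LinearMap.ker (dmap f ν k (k - 1))).subtype)

/-- The `k`-th cohomology group of the cochain complex associated to `(f, ν)`. -/
noncomputable abbrev coHk {V : Type*} [Fintype V] [DecidableEq V]
    (f : V → ℤ) (ν : V → V → ℤ) (k : ℤ) :=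
  LinearMap.ker (dmap f ν k (k + 1)) ⧸
    ((LinearMap.range (dmap f ν (k - 1) k)).comap
      (LinearMap.ker (dmap f ν k (k + 1))).subtype)


open Module LinearMap Matrix Finset

section Aux

variable {α β : Type*} [Fintype α] [Fintype β] [DecidableEq α] [DecidableEq β]

lemma rn (L : (α → ℤ) →ₗ[ℤ] (β → ℤ)) :
    finrank ℤ (LinearMap.range L) + finrank ℤ (LinearMap.ker L) = Fintype.card α := by
  rw [← LinearEquiv.finrank_eq L.quotKerEquivRange, Submodule.finrank_quotient_add_finrank,
    Module.finrank_fintype_fun_eq_card]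

lemma finrank_sup_add_finrank_inf (a b : Submodule ℤ (α → ℤ)) :
    finrank ℤ ↥(a ⊔ b) + finrank ℤ ↥(a ⊓ b) = finrank ℤ a + finrank ℤ b := by
  have h := Submodule.rank_sup_add_rank_inf_eq a b
  rw [← Submodule.finrank_eq_rank, ← Submodule.finrank_eq_rank, ← Submodule.finrank_eq_rank,
    ← Submodule.finrank_eq_rank, ← Nat.cast_add, ← Nat.cast_add, Nat.cast_inj] at h
  exact h

lemma hodge (P : Matrix α α ℤ) (hP : P * P = 0) :
    (P + Pᵀ).rank = 2 * P.rank ∧ Pᵀ.rank = P.rank := by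
  classical
  have hPT : Pᵀ * Pᵀ = 0 := by rw [← Matrix.transpose_mul, hP, Matrix.transpose_zero]
  have k1 : LinearMap.ker (P + Pᵀ).mulVecLin
      = LinearMap.ker P.mulVecLin ⊓ LinearMap.ker Pᵀ.mulVecLin := by
    apply le_antisymm
    · intro x hx
      have hx' : (P + Pᵀ) *ᵥ x = 0 := hx
      rw [Matrix.add_mulVec] at hx'
      have hab : (P *ᵥ x) ⬝ᵥ (Pᵀ *ᵥ x) = 0 := by
        rw [Matrix.dotProduct_mulVec, Matrix.vecMul_transpose, Matrix.mulVec_mulVec, hP,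
          Matrix.zero_mulVec, zero_dotProduct]
      have ha : P *ᵥ x = 0 := by
        have h' : (P *ᵥ x) ⬝ᵥ (P *ᵥ x) = 0 := by
          have hneg : P *ᵥ x = -(Pᵀ *ᵥ x) := by
            rw [eq_neg_iff_add_eq_zero]; exact hx'
          nth_rewrite 2 [hneg]
          rw [dotProduct_neg, hab, neg_zero]
        exact dotProduct_self_eq_zero.mp h'
      have hb : Pᵀ *ᵥ x = 0 := by rwa [ha, zero_add] at hx'
      exact ⟨ha, hb⟩
    · intro x hx
      obtain ⟨h1, h2⟩ := hx
      have h1' : P *ᵥ x = 0 := h1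
      have h2' : Pᵀ *ᵥ x = 0 := h2
      show (P + Pᵀ) *ᵥ x = 0
      rw [Matrix.add_mulVec, h1', h2', add_zero]
  have k3 : LinearMap.range Pᵀ.mulVecLin ≤ LinearMap.ker Pᵀ.mulVecLin := by
    rintro x ⟨y, rfl⟩
    show Pᵀ *ᵥ (Pᵀ *ᵥ y) = 0
    rw [Matrix.mulVec_mulVec, hPT, Matrix.zero_mulVec]
  have k3' : LinearMap.range P.mulVecLin ≤ LinearMap.ker P.mulVecLin := by
    rintro x ⟨y, rfl⟩
    show P *ᵥ (P *ᵥ y) = 0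
    rw [Matrix.mulVec_mulVec, hP, Matrix.zero_mulVec]
  have k2 : LinearMap.ker P.mulVecLin ⊓ LinearMap.range Pᵀ.mulVecLin = ⊥ := by
    rw [eq_bot_iff]
    rintro x ⟨hk, y, rfl⟩
    have hk' : P *ᵥ (Pᵀ *ᵥ y) = 0 := hk
    have hdot : (Pᵀ *ᵥ y) ⬝ᵥ (Pᵀ *ᵥ y) = 0 := by
      nth_rewrite 1 [Matrix.mulVec_transpose]
      rw [← Matrix.dotProduct_mulVec, hk', dotProduct_zero]
    have hx0 : Pᵀ *ᵥ y = 0 := dotProduct_self_eq_zero.mp hdot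
    rw [Submodule.mem_bot, Matrix.mulVecLin_apply]
    exact hx0
  have k2' : LinearMap.ker Pᵀ.mulVecLin ⊓ LinearMap.range P.mulVecLin = ⊥ := by
    rw [eq_bot_iff]
    rintro x ⟨hk, y, rfl⟩
    have hk' : Pᵀ *ᵥ (P *ᵥ y) = 0 := hk
    have hdot : (P *ᵥ y) ⬝ᵥ (P *ᵥ y) = 0 := by
      nth_rewrite 1 [← Matrix.vecMul_transpose]
      rw [← Matrix.dotProduct_mulVec, hk', dotProduct_zero]
    have hx0 : P *ᵥ y = 0 := dotProduct_self_eq_zero.mp hdot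
    rw [Submodule.mem_bot, Matrix.mulVecLin_apply]
    exact hx0
  -- numerics
  have r1 := rn P.mulVecLin
  have r2 := rn Pᵀ.mulVecLin
  have r3 := rn (P + Pᵀ).mulVecLin
  have hrankP : P.rank = finrank ℤ (LinearMap.range P.mulVecLin) := rfl
  have hrankPT : Pᵀ.rank = finrank ℤ (LinearMap.range Pᵀ.mulVecLin) := rfl
  have hrankS : (P + Pᵀ).rank = finrank ℤ (LinearMap.range (P + Pᵀ).mulVecLin) := rfl
  have hsum := finrank_sup_add_finrank_inf (LinearMap.ker P.mulVecLin) (LinearMap.ker Pᵀ.mulVecLin)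
  have hk1 : finrank ℤ (LinearMap.ker (P + Pᵀ).mulVecLin)
      = finrank ℤ ↥(LinearMap.ker P.mulVecLin ⊓ LinearMap.ker Pᵀ.mulVecLin) := by rw [k1]
  have hd1 := finrank_sup_add_finrank_inf (LinearMap.ker P.mulVecLin)
    (LinearMap.range Pᵀ.mulVecLin)
  rw [k2, finrank_bot, add_zero] at hd1
  have hd2 := finrank_sup_add_finrank_inf (LinearMap.ker Pᵀ.mulVecLin)
    (LinearMap.range P.mulVecLin)
  rw [k2', finrank_bot, add_zero] at hd2
  have hm1 : finrank ℤ ↥(LinearMap.ker P.mulVecLin ⊔ LinearMap.range Pᵀ.mulVecLin)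
      ≤ finrank ℤ ↥(LinearMap.ker P.mulVecLin ⊔ LinearMap.ker Pᵀ.mulVecLin) :=
    Submodule.finrank_mono (sup_le_sup_left k3 _)
  have hm2 : finrank ℤ ↥(LinearMap.ker Pᵀ.mulVecLin ⊔ LinearMap.range P.mulVecLin)
      ≤ finrank ℤ ↥(LinearMap.ker Pᵀ.mulVecLin ⊔ LinearMap.ker P.mulVecLin) :=
    Submodule.finrank_mono (sup_le_sup_left k3' _)
  have hcomm : finrank ℤ ↥(LinearMap.ker Pᵀ.mulVecLin ⊔ LinearMap.ker P.mulVecLin)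
      = finrank ℤ ↥(LinearMap.ker P.mulVecLin ⊔ LinearMap.ker Pᵀ.mulVecLin) := by rw [sup_comm]
  have htop : finrank ℤ ↥(LinearMap.ker P.mulVecLin ⊔ LinearMap.ker Pᵀ.mulVecLin)
      ≤ Fintype.card α := by
    have := Submodule.finrank_le (LinearMap.ker P.mulVecLin ⊔ LinearMap.ker Pᵀ.mulVecLin)
    rwa [Module.finrank_fintype_fun_eq_card] at this
  rw [hrankP, hrankPT, hrankS]
  omega

end Aux

namespace CGAux
variable {V : Type*} [Fintype V] [DecidableEq V] (h : V → ℤ) (ν : V → V → ℤ)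

lemma dmap_apply (j k : ℤ) (z : {v : V // h v = j} → ℤ) (u : {v : V // h v = k}) :
    dmap h ν j k z u = ∑ w : {v : V // h v = j}, ν w.1 u.1 * z w := by
  simp [dmap, Matrix.toLin'_apply, Matrix.mulVec, dotProduct]

/-- The global "down" operator: entry `(v, w)` is `ν v w` when `h v + 1 = h w`. -/
def Pmat : Matrix V V ℤ := Matrix.of fun v w => if h v + 1 = h w then ν v w else 0

lemma Pmul_apply (x : V → ℤ) (v : V) :
    (Pmat h ν).mulVecLin x v = ∑ w : V, (if h v + 1 = h w then ν v w else 0) * x w := by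
  simp [Pmat, Matrix.mulVecLin_apply, Matrix.mulVec, dotProduct]

lemma PTmul_apply (x : V → ℤ) (v : V) :
    (Pmat h ν)ᵀ.mulVecLin x v = ∑ w : V, (if h w + 1 = h v then ν w v else 0) * x w := by
  simp only [Matrix.mulVecLin_apply, Matrix.mulVec, dotProduct, Matrix.transpose_apply,
    Pmat, Matrix.of_apply]

/-- subtype sum vs if-sum -/
lemma subtype_sum (k : ℤ) (F : V → ℤ) :
    (∑ w : {v : V // h v = k}, F w.1) = ∑ w : V, if h w = k then F w else 0 := by
  rw [← Finset.sum_filter]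
  exact (Finset.sum_subtype (Finset.univ.filter (fun w => h w = k)) (by simp) F).symm

variable (hsym : ∀ a b : V, ν a b = ν b a)

include hsym in
lemma I_down (x : V → ℤ) (k : ℤ) (u : {v : V // h v = k - 1}) :
    dmap h ν k (k - 1) (fun w => x w.1) u = (Pmat h ν).mulVecLin x u.1 := by
  rw [dmap_apply, Pmul_apply]
  rw [subtype_sum h k (fun w => ν w u.1 * x w)]
  refine Finset.sum_congr rfl fun w _ => ?_
  obtain ⟨v, hv⟩ := u
  simp only
  by_cases hw : h w = k
  · rw [if_pos hw, if_pos (by omega), hsym]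
  · rw [if_neg hw, if_neg (by omega), zero_mul]

lemma I_up (x : V → ℤ) (k : ℤ) (u : {v : V // h v = k + 1}) :
    dmap h ν k (k + 1) (fun w => x w.1) u = (Pmat h ν)ᵀ.mulVecLin x u.1 := by
  rw [dmap_apply, PTmul_apply]
  rw [subtype_sum h k (fun w => ν w u.1 * x w)]
  refine Finset.sum_congr rfl fun w _ => ?_
  obtain ⟨v, hv⟩ := u
  simp only
  by_cases hw : h w = k
  · rw [if_pos hw, if_pos (by omega)]
  · rw [if_neg hw, if_neg (by omega), zero_mul]

/-- glue a level-indexed family into a function on `V` -/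
def glueF (y : ∀ k : (Finset.image h Finset.univ : Finset ℤ), ({v : V // h v = (k : ℤ)} → ℤ)) :
    V → ℤ :=
  fun v => y ⟨h v, Finset.mem_image_of_mem h (Finset.mem_univ v)⟩ ⟨v, rfl⟩

lemma glue_restrict (y) (k : ℤ) (hk : k ∈ Finset.image h Finset.univ)
    (w : {v : V // h v = k}) : glueF h y w.1 = y ⟨k, hk⟩ w := by
  obtain ⟨v, hv⟩ := w
  subst hv
  rfl

end CGAux

namespace CGAux
variable {V : Type*} [Fintype V] [DecidableEq V] (h : V → ℤ) (ν : V → V → ℤ)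
variable (hsym : ∀ a b : V, ν a b = ν b a)

lemma mem_image_of_level {k : ℤ} (v : V) (hv : h v = k) : k ∈ Finset.image h Finset.univ := by
  subst hv; exact Finset.mem_image_of_mem h (Finset.mem_univ v)

include hsym in
/-- kernel of the global down operator decomposes as product of kernels -/
noncomputable def kerEquivDown :
    ↥(LinearMap.ker (Pmat h ν).mulVecLin) ≃ₗ[ℤ]
      ∀ k : (Finset.image h Finset.univ : Finset ℤ),
        ↥(LinearMap.ker (dmap h ν (k : ℤ) ((k : ℤ) - 1))) where
  toFun x := fun k => ⟨fun w => x.1 w.1, by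
    rw [LinearMap.mem_ker]
    funext u
    rw [I_down h ν hsym x.1 (k : ℤ) u]
    have hx : (Pmat h ν).mulVecLin x.1 = 0 := x.2
    rw [hx]; rfl⟩
  map_add' x y := by ext k w; rfl
  map_smul' c x := by ext k w; rfl
  invFun y := ⟨glueF h (fun k => (y k).1), by
    rw [LinearMap.mem_ker]
    funext v
    rw [Pmul_apply]
    by_cases hk : h v + 1 ∈ Finset.image h Finset.univ
    · have hu : h v = (h v + 1) - 1 := by ring
      have key := I_down h ν hsym (glueF h (fun k => (y k).1)) (h v + 1) ⟨v, hu⟩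
      rw [Pmul_apply] at key
      rw [← key]
      have hres : (fun w : {a : V // h a = h v + 1} => glueF h (fun k => (y k).1) w.1)
          = (y ⟨h v + 1, hk⟩).1 := by
        funext w
        exact glue_restrict h (fun k => (y k).1) (h v + 1) hk w
      rw [hres]
      have := (y ⟨h v + 1, hk⟩).2
      rw [LinearMap.mem_ker] at this
      rw [this]; rfl
    · apply Finset.sum_eq_zero
      intro w _
      have : ¬ (h v + 1 = h w) := fun hc => hk (hc ▸ mem_image_of_level h w rfl)
      rw [if_neg this, zero_mul]⟩
  left_inv x := by
    apply Subtype.ext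
    funext v
    rfl
  right_inv y := by
    funext k
    apply Subtype.ext
    funext w
    exact glue_restrict h (fun k => (y k).1) (k : ℤ) k.2 w

noncomputable def kerEquivUp :
    ↥(LinearMap.ker (Pmat h ν)ᵀ.mulVecLin) ≃ₗ[ℤ]
      ∀ k : (Finset.image h Finset.univ : Finset ℤ),
        ↥(LinearMap.ker (dmap h ν (k : ℤ) ((k : ℤ) + 1))) where
  toFun x := fun k => ⟨fun w => x.1 w.1, by
    rw [LinearMap.mem_ker]
    funext u
    rw [I_up h ν x.1 (k : ℤ) u]
    have hx : (Pmat h ν)ᵀ.mulVecLin x.1 = 0 := x.2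
    rw [hx]; rfl⟩
  map_add' x y := by ext k w; rfl
  map_smul' c x := by ext k w; rfl
  invFun y := ⟨glueF h (fun k => (y k).1), by
    rw [LinearMap.mem_ker]
    funext v
    rw [PTmul_apply]
    by_cases hk : h v - 1 ∈ Finset.image h Finset.univ
    · have hu : h v = (h v - 1) + 1 := by ring
      have key := I_up h ν (glueF h (fun k => (y k).1)) (h v - 1) ⟨v, hu⟩
      rw [PTmul_apply] at key
      rw [← key]
      have hres : (fun w : {a : V // h a = h v - 1} => glueF h (fun k => (y k).1) w.1)
          = (y ⟨h v - 1, hk⟩).1 := by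
        funext w
        exact glue_restrict h (fun k => (y k).1) (h v - 1) hk w
      rw [hres]
      have := (y ⟨h v - 1, hk⟩).2
      rw [LinearMap.mem_ker] at this
      rw [this]; rfl
    · apply Finset.sum_eq_zero
      intro w _
      have : ¬ (h w + 1 = h v) := fun hc => hk (by
        have : h w = h v - 1 := by omega
        exact this ▸ mem_image_of_level h w rfl)
      rw [if_neg this, zero_mul]⟩
  left_inv x := by
    apply Subtype.ext
    funext v
    rfl
  right_inv y := by
    funext k
    apply Subtype.ext
    funext w
    exact glue_restrict h (fun k => (y k).1) (k : ℤ) k.2 w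

end CGAux

namespace CGAux
variable {V : Type*} [Fintype V] [DecidableEq V] (h : V → ℤ) (ν : V → V → ℤ)
variable (hsym : ∀ a b : V, ν a b = ν b a)

lemma level_count : ∑ k ∈ Finset.image h Finset.univ, Fintype.card {v : V // h v = k}
    = Fintype.card V := by
  rw [Fintype.card]
  rw [Finset.card_eq_sum_card_fiberwise (f := h) (t := Finset.image h Finset.univ)
    (fun x _ => Finset.mem_image_of_mem h (Finset.mem_univ x))]
  exact Finset.sum_congr rfl fun k _ => Fintype.card_subtype _

include hsym in
lemma ker_down_sum : finrank ℤ (LinearMap.ker (Pmat h ν).mulVecLin)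
    = ∑ k ∈ Finset.image h Finset.univ, finrank ℤ (LinearMap.ker (dmap h ν k (k - 1))) := by
  calc finrank ℤ (LinearMap.ker (Pmat h ν).mulVecLin)
      = finrank ℤ (∀ k : (Finset.image h Finset.univ : Finset ℤ),
          ↥(LinearMap.ker (dmap h ν (k : ℤ) ((k : ℤ) - 1)))) := (kerEquivDown h ν hsym).finrank_eq
    _ = ∑ k : (Finset.image h Finset.univ : Finset ℤ),
          finrank ℤ (LinearMap.ker (dmap h ν (k : ℤ) ((k : ℤ) - 1))) :=
        Module.finrank_pi_fintype ℤ
    _ = _ := Finset.sum_coe_sort (Finset.image h Finset.univ)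
          (fun k => finrank ℤ (LinearMap.ker (dmap h ν k (k - 1))))

lemma ker_up_sum : finrank ℤ (LinearMap.ker (Pmat h ν)ᵀ.mulVecLin)
    = ∑ k ∈ Finset.image h Finset.univ, finrank ℤ (LinearMap.ker (dmap h ν k (k + 1))) := by
  calc finrank ℤ (LinearMap.ker (Pmat h ν)ᵀ.mulVecLin)
      = finrank ℤ (∀ k : (Finset.image h Finset.univ : Finset ℤ),
          ↥(LinearMap.ker (dmap h ν (k : ℤ) ((k : ℤ) + 1)))) := (kerEquivUp h ν).finrank_eq
    _ = ∑ k : (Finset.image h Finset.univ : Finset ℤ),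
          finrank ℤ (LinearMap.ker (dmap h ν (k : ℤ) ((k : ℤ) + 1))) :=
        Module.finrank_pi_fintype ℤ
    _ = _ := Finset.sum_coe_sort (Finset.image h Finset.univ)
          (fun k => finrank ℤ (LinearMap.ker (dmap h ν k (k + 1))))

include hsym in
lemma rank_Pmat_down : (Pmat h ν).rank
    = ∑ k ∈ Finset.image h Finset.univ, finrank ℤ (LinearMap.range (dmap h ν k (k - 1))) := by
  have h1 := rn (Pmat h ν).mulVecLin
  have h2 : ∀ k : ℤ, finrank ℤ (LinearMap.range (dmap h ν k (k - 1)))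
      + finrank ℤ (LinearMap.ker (dmap h ν k (k - 1))) = Fintype.card {v : V // h v = k} :=
    fun k => rn _
  have h3 := level_count h
  have h4 := ker_down_sum h ν hsym
  have h5 : ∑ k ∈ Finset.image h Finset.univ, (finrank ℤ (LinearMap.range (dmap h ν k (k - 1)))
      + finrank ℤ (LinearMap.ker (dmap h ν k (k - 1)))) = Fintype.card V := by
    rw [Finset.sum_congr rfl fun k _ => h2 k, h3]
  rw [Finset.sum_add_distrib] at h5
  have hrk : (Pmat h ν).rank = finrank ℤ (LinearMap.range (Pmat h ν).mulVecLin) := rfl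
  omega

lemma rank_Pmat_up : (Pmat h ν)ᵀ.rank
    = ∑ k ∈ Finset.image h Finset.univ, finrank ℤ (LinearMap.range (dmap h ν k (k + 1))) := by
  have h1 := rn (Pmat h ν)ᵀ.mulVecLin
  have h2 : ∀ k : ℤ, finrank ℤ (LinearMap.range (dmap h ν k (k + 1)))
      + finrank ℤ (LinearMap.ker (dmap h ν k (k + 1))) = Fintype.card {v : V // h v = k} :=
    fun k => rn _
  have h3 := level_count h
  have h4 := ker_up_sum h ν
  have h5 : ∑ k ∈ Finset.image h Finset.univ, (finrank ℤ (LinearMap.range (dmap h ν k (k + 1)))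
      + finrank ℤ (LinearMap.ker (dmap h ν k (k + 1)))) = Fintype.card V := by
    rw [Finset.sum_congr rfl fun k _ => h2 k, h3]
  rw [Finset.sum_add_distrib] at h5
  have hrk : (Pmat h ν)ᵀ.rank = finrank ℤ (LinearMap.range (Pmat h ν)ᵀ.mulVecLin) := rfl
  omega

/-- if the level is empty, ranges into/out of it are trivial -/
lemma finrank_range_zero_of_dom_empty {M : Type*} [AddCommGroup M] [Module ℤ M]
    {N : Type*} [AddCommGroup N] [Module ℤ N] [Subsingleton M] (L : M →ₗ[ℤ] N) :
    finrank ℤ (LinearMap.range L) = 0 := by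
  have : Subsingleton ↥(LinearMap.range L) := by
    constructor
    rintro ⟨_, x, rfl⟩ ⟨_, y, rfl⟩
    simp [Subsingleton.elim x y]
  exact Module.finrank_zero_of_subsingleton

lemma finrank_range_zero_of_cod_subsingleton {M : Type*} [AddCommGroup M] [Module ℤ M]
    {N : Type*} [AddCommGroup N] [Module ℤ N] [Subsingleton N] (L : M →ₗ[ℤ] N) :
    finrank ℤ (LinearMap.range L) = 0 :=
  Module.finrank_zero_of_subsingleton

lemma level_subsingleton {k : ℤ} (hk : k ∉ Finset.image h Finset.univ) :
    Subsingleton ({v : V // h v = k} → ℤ) := by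
  have : IsEmpty {v : V // h v = k} := by
    rw [isEmpty_subtype]
    exact fun v hv => hk (mem_image_of_level h v hv)
  infer_instance

end CGAux

namespace CGAux
variable {V : Type*} [Fintype V] [DecidableEq V] (f : V → ℤ) (ν : V → V → ℤ)
variable (hsym : ∀ a b : V, ν a b = ν b a)
variable (hch : ∀ a b : V, f b = f a + 2 →
      (∑ c : V, if f c = f a + 1 then ν a c * ν c b else 0) = 0)

include hsym hch in
lemma inner_zero {k : ℤ} (a b : V) (ha : f a = k - 1) (hb : f b = k + 1) :
    (∑ c : {v : V // f v = k}, ν c.1 a * ν b c.1) = 0 := by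
  rw [subtype_sum f k (fun c => ν c a * ν b c)]
  have step : (∑ c : V, if f c = k then ν c a * ν b c else 0)
      = ∑ c : V, if f c = f a + 1 then ν a c * ν c b else 0 := by
    refine Finset.sum_congr rfl fun c _ => ?_
    by_cases hc : f c = k
    · rw [if_pos hc, if_pos (by omega), hsym c a, hsym b c]
    · rw [if_neg hc, if_neg (by omega)]
  rw [step, hch a b (by omega)]

include hsym hch in
lemma d2_down (k : ℤ) :
    LinearMap.range (dmap f ν (k + 1) k) ≤ LinearMap.ker (dmap f ν k (k - 1)) := by
  rintro x ⟨z, rfl⟩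
  rw [LinearMap.mem_ker]
  funext u
  rw [dmap_apply]
  have e1 : ∀ c : {v : V // f v = k}, ν c.1 u.1 * dmap f ν (k + 1) k z c
      = ∑ w : {v : V // f v = k + 1}, ν c.1 u.1 * (ν w.1 c.1 * z w) := by
    intro c; rw [dmap_apply, Finset.mul_sum]
  rw [Finset.sum_congr rfl fun c _ => e1 c, Finset.sum_comm]
  have : ∀ w : {v : V // f v = k + 1},
      (∑ c : {v : V // f v = k}, ν c.1 u.1 * (ν w.1 c.1 * z w))
      = (∑ c : {v : V // f v = k}, ν c.1 u.1 * ν w.1 c.1) * z w := by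
    intro w; rw [Finset.sum_mul]; exact Finset.sum_congr rfl fun c _ => by ring
  rw [Finset.sum_congr rfl fun w _ => this w]
  have hz : ∀ w : {v : V // f v = k + 1},
      (∑ c : {v : V // f v = k}, ν c.1 u.1 * ν w.1 c.1) * z w = 0 := by
    intro w
    rw [inner_zero f ν hsym hch u.1 w.1 u.2 w.2, zero_mul]
  rw [Finset.sum_congr rfl fun w _ => hz w, Finset.sum_const_zero]
  rfl

include hsym hch in
lemma d2_up (k : ℤ) :
    LinearMap.range (dmap f ν (k - 1) k) ≤ LinearMap.ker (dmap f ν k (k + 1)) := by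
  rintro x ⟨z, rfl⟩
  rw [LinearMap.mem_ker]
  funext u
  rw [dmap_apply]
  have e1 : ∀ c : {v : V // f v = k}, ν c.1 u.1 * dmap f ν (k - 1) k z c
      = ∑ w : {v : V // f v = k - 1}, ν c.1 u.1 * (ν w.1 c.1 * z w) := by
    intro c; rw [dmap_apply, Finset.mul_sum]
  rw [Finset.sum_congr rfl fun c _ => e1 c, Finset.sum_comm]
  have : ∀ w : {v : V // f v = k - 1},
      (∑ c : {v : V // f v = k}, ν c.1 u.1 * (ν w.1 c.1 * z w))
      = (∑ c : {v : V // f v = k}, ν c.1 w.1 * ν u.1 c.1) * z w := by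
    intro w
    rw [Finset.sum_mul]
    refine Finset.sum_congr rfl fun c _ => ?_
    rw [hsym c.1 u.1, hsym w.1 c.1]; ring
  rw [Finset.sum_congr rfl fun w _ => this w]
  have hz : ∀ w : {v : V // f v = k - 1},
      (∑ c : {v : V // f v = k}, ν c.1 w.1 * ν u.1 c.1) * z w = 0 := by
    intro w
    rw [inner_zero f ν hsym hch w.1 u.1 w.2 u.2, zero_mul]
  rw [Finset.sum_congr rfl fun w _ => hz w, Finset.sum_const_zero]
  rfl

include hch in
lemma PP_zero_chain : Pmat f ν * Pmat f ν = 0 := by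
  ext v w
  rw [Matrix.mul_apply]
  by_cases hw : f w = f v + 2
  · have : ∀ c : V, Pmat f ν v c * Pmat f ν c w
        = if f c = f v + 1 then ν v c * ν c w else 0 := by
      intro c
      simp only [Pmat, Matrix.of_apply]
      by_cases hc : f c = f v + 1
      · rw [if_pos (by omega), if_pos (by omega), if_pos hc]
      · rw [if_neg hc]
        by_cases h1 : f v + 1 = f c
        · omega
        · rw [if_neg h1, zero_mul]
    rw [Finset.sum_congr rfl fun c _ => this c, hch v w hw]
    rfl
  · have : ∀ c : V, Pmat f ν v c * Pmat f ν c w = 0 := by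
      intro c
      simp only [Pmat, Matrix.of_apply]
      by_cases h1 : f v + 1 = f c
      · by_cases h2 : f c + 1 = f w
        · omega
        · rw [if_neg h2, mul_zero]
      · rw [if_neg h1, zero_mul]
    rw [Finset.sum_congr rfl fun c _ => this c, Finset.sum_const_zero]
    rfl

lemma PP_zero_01 (g : V → ℤ) (hg01 : ∀ v : V, g v = 0 ∨ g v = 1) :
    Pmat g ν * Pmat g ν = 0 := by
  ext v w
  rw [Matrix.mul_apply]
  have : ∀ c : V, Pmat g ν v c * Pmat g ν c w = 0 := by
    intro c
    simp only [Pmat, Matrix.of_apply]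
    by_cases h1 : g v + 1 = g c
    · by_cases h2 : g c + 1 = g w
      · rcases hg01 v with h | h <;> rcases hg01 c with h' | h' <;>
          rcases hg01 w with h'' | h'' <;> omega
      · rw [if_neg h2, mul_zero]
    · rw [if_neg h1, zero_mul]
  rw [Finset.sum_congr rfl fun c _ => this c, Finset.sum_const_zero]
  rfl

end CGAux

namespace CGAux
variable {V : Type*} [Fintype V] [DecidableEq V] (ν : V → V → ℤ)

lemma rank_toLin' {α β : Type*} [Fintype α] [Fintype β] [DecidableEq α] [DecidableEq β]
    (M : Matrix α β ℤ) : finrank ℤ (LinearMap.range (Matrix.toLin' M)) = M.rank := by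
  have : (Matrix.toLin' M : (β → ℤ) →ₗ[ℤ] (α → ℤ)) = M.mulVecLin := by
    apply LinearMap.ext
    intro x
    rw [Matrix.toLin'_apply, Matrix.mulVecLin_apply]
  rw [this, Matrix.rank]

variable {G : SimpleGraph V} {f g : V → ℤ}

lemma Pmat_add_transpose_eq
    (hν : ∀ a b : V, ν a b ≠ 0 ↔ G.Adj a b)
    (hsym : ∀ a b : V, ν a b = ν b a)
    (hf : ∀ ⦃a b : V⦄, G.Adj a b → f a - f b = 1 ∨ f a - f b = -1)
    (hg : ∀ ⦃a b : V⦄, G.Adj a b → g a - g b = 1 ∨ g a - g b = -1) :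
    Pmat f ν + (Pmat f ν)ᵀ = Pmat g ν + (Pmat g ν)ᵀ := by
  ext v w
  simp only [Matrix.add_apply, Matrix.transpose_apply, Pmat, Matrix.of_apply]
  rw [hsym w v]
  by_cases hadj : G.Adj v w
  · rcases hf hadj with h1 | h1 <;> rcases hg hadj with h2 | h2 <;>
      split_ifs <;> first | omega | ring
  · have h0 : ν v w = 0 := by
      by_contra hc
      exact hadj ((hν v w).mp hc)
    rw [h0]
    split_ifs <;> ring

lemma rank_Pmat_g_eq_rank_A (hsym : ∀ a b : V, ν a b = ν b a)
    (hg01 : ∀ v : V, g v = 0 ∨ g v = 1) :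
    (∑ k ∈ Finset.image g Finset.univ, finrank ℤ (LinearMap.range (dmap g ν k (k - 1))))
    = (Matrix.of fun (v : {v : V // g v = 0}) (w : {v : V // g v = 1}) =>
        ν v.1 w.1).rank := by
  have hsub : Finset.image g Finset.univ ⊆ ({0, 1} : Finset ℤ) := by
    intro k hk
    obtain ⟨v, _, rfl⟩ := Finset.mem_image.mp hk
    rcases hg01 v with h | h <;> simp [h]
  have hvan : ∀ k ∈ ({0, 1} : Finset ℤ), k ∉ Finset.image g Finset.univ →
      finrank ℤ (LinearMap.range (dmap g ν k (k - 1))) = 0 := by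
    intro k _ hk
    haveI := level_subsingleton g hk
    exact finrank_range_zero_of_dom_empty _
  rw [Finset.sum_subset hsub hvan]
  have h01 : ({0, 1} : Finset ℤ) = insert 0 {1} := rfl
  rw [h01, Finset.sum_insert (by norm_num), Finset.sum_singleton]
  -- the k = 0 term vanishes since no vertex has g v = -1
  have hzero : finrank ℤ (LinearMap.range (dmap g ν 0 (0 - 1))) = 0 := by
    haveI : IsEmpty {v : V // g v = (0 : ℤ) - 1} := by
      rw [isEmpty_subtype]
      intro v hv
      rcases hg01 v with h | h <;> omega
    haveI : Subsingleton ({v : V // g v = (0 : ℤ) - 1} → ℤ) := inferInstance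
    exact finrank_range_zero_of_cod_subsingleton _
  rw [hzero, zero_add]
  -- the k = 1 term is the rank of the representation matrix
  have h10 : finrank ℤ (LinearMap.range (dmap g ν 1 (1 - 1)))
      = (Matrix.of fun (w : {v : V // g v = (1 : ℤ) - 1}) (v : {v : V // g v = 1}) =>
          ν v.1 w.1).rank := rank_toLin' _
  rw [h10]
  have hM : (Matrix.of fun (w : {v : V // g v = (1 : ℤ) - 1}) (v : {v : V // g v = 1}) =>
        ν v.1 w.1)
      = (Matrix.of fun (v : {v : V // g v = 0}) (w : {v : V // g v = 1}) => ν v.1 w.1) := by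
    ext u w
    exact hsym w.1 u.1
  rw [hM]

end CGAux


section Main
open CGAux

/-- For a connected chain graph with more than one vertex, the sum of the free ranks of
the homology (resp. cohomology) groups equals `|G₁| + |G₂| - 2 rank A`, where `G₁, G₂`
are the distance components of a representation gradation `g` and `A = (ν v w)` is the
corresponding representation matrix. -/
theorem sum_rank_homology_eq_global_dimension
    {V : Type*} [Fintype V] [DecidableEq V] (G : SimpleGraph V)
    (f : V → ℤ) (ν : V → V → ℤ)
    (hchain : IsChainGraph G f ν) (hconn : G.Connected) (hcard : 1 < Fintype.card V)
    (g : V → ℤ) (hg : IsGradation G g) (hg01 : ∀ v : V, g v = 0 ∨ g v = 1) :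
    (∑ᶠ k : ℤ, (Module.finrank ℤ (Hk f ν k) : ℤ)) =
      (Fintype.card {v : V // g v = 0} : ℤ) + (Fintype.card {v : V // g v = 1} : ℤ) -
        2 * ((Matrix.of fun (v : {v : V // g v = 0}) (w : {v : V // g v = 1}) =>
          ν v.1 w.1).rank : ℤ) ∧
    (∑ᶠ k : ℤ, (Module.finrank ℤ (coHk f ν k) : ℤ)) =
      (Fintype.card {v : V // g v = 0} : ℤ) + (Fintype.card {v : V // g v = 1} : ℤ) -
        2 * ((Matrix.of fun (v : {v : V // g v = 0}) (w : {v : V // g v = 1}) =>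
          ν v.1 w.1).rank : ℤ) := by
  classical
  obtain ⟨hgradf, ⟨hsym, hnu⟩, hch⟩ := hchain
  set S : Finset ℤ := Finset.image f Finset.univ with hSdef
  set A : Matrix {v : V // g v = 0} {v : V // g v = 1} ℤ :=
    Matrix.of fun (v : {v : V // g v = 0}) (w : {v : V // g v = 1}) => ν v.1 w.1 with hAdef
  -- ranks of the down/up differentials
  -- vanishing lemmas
  have hr_dom : ∀ (j k : ℤ), j ∉ S → finrank ℤ (LinearMap.range (dmap f ν j k)) = 0 := by
    intro j k hj
    haveI := level_subsingleton f hj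
    haveI : Subsingleton ({v : V // f v = j} → ℤ) := inferInstance
    exact finrank_range_zero_of_dom_empty _
  have hr_cod : ∀ (j k : ℤ), k ∉ S → finrank ℤ (LinearMap.range (dmap f ν j k)) = 0 := by
    intro j k hk
    haveI := level_subsingleton f hk
    exact finrank_range_zero_of_cod_subsingleton _
  -- rank-nullity for the differentials
  have hrn_down : ∀ k : ℤ, finrank ℤ (LinearMap.range (dmap f ν k (k - 1)))
      + finrank ℤ (LinearMap.ker (dmap f ν k (k - 1))) = Fintype.card {v : V // f v = k} :=
    fun k => rn _
  have hrn_up : ∀ k : ℤ, finrank ℤ (LinearMap.range (dmap f ν k (k + 1)))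
      + finrank ℤ (LinearMap.ker (dmap f ν k (k + 1))) = Fintype.card {v : V // f v = k} :=
    fun k => rn _
  -- homology/cohomology rank formulas
  have hHk : ∀ k : ℤ, finrank ℤ (Hk f ν k)
      + finrank ℤ (LinearMap.range (dmap f ν (k + 1) k))
      = finrank ℤ (LinearMap.ker (dmap f ν k (k - 1))) := by
    intro k
    have hle := d2_down f ν hsym hch k
    have h1 := Submodule.finrank_quotient_add_finrank
      ((LinearMap.range (dmap f ν (k + 1) k)).comap
        (LinearMap.ker (dmap f ν k (k - 1))).subtype)
    rw [(Submodule.comapSubtypeEquivOfLe hle).finrank_eq] at h1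
    exact h1
  have hcoHk : ∀ k : ℤ, finrank ℤ (coHk f ν k)
      + finrank ℤ (LinearMap.range (dmap f ν (k - 1) k))
      = finrank ℤ (LinearMap.ker (dmap f ν k (k + 1))) := by
    intro k
    have hle := d2_up f ν hsym hch k
    have h1 := Submodule.finrank_quotient_add_finrank
      ((LinearMap.range (dmap f ν (k - 1) k)).comap
        (LinearMap.ker (dmap f ν k (k + 1))).subtype)
    rw [(Submodule.comapSubtypeEquivOfLe hle).finrank_eq] at h1
    exact h1
  -- support of the homology
  have hsubH : ∀ k : ℤ, k ∉ S → Subsingleton (Hk f ν k) := by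
    intro k hk
    haveI := level_subsingleton f hk
    haveI : Subsingleton ↥(LinearMap.ker (dmap f ν k (k - 1))) :=
      ⟨fun a b => Subtype.ext (Subsingleton.elim _ _)⟩
    constructor
    intro a b
    obtain ⟨x, rfl⟩ := Submodule.Quotient.mk_surjective _ a
    obtain ⟨y, rfl⟩ := Submodule.Quotient.mk_surjective _ b
    rw [Subsingleton.elim x y]
  have hsubcoH : ∀ k : ℤ, k ∉ S → Subsingleton (coHk f ν k) := by
    intro k hk
    haveI := level_subsingleton f hk
    haveI : Subsingleton ↥(LinearMap.ker (dmap f ν k (k + 1))) :=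
      ⟨fun a b => Subtype.ext (Subsingleton.elim _ _)⟩
    constructor
    intro a b
    obtain ⟨x, rfl⟩ := Submodule.Quotient.mk_surjective _ a
    obtain ⟨y, rfl⟩ := Submodule.Quotient.mk_surjective _ b
    rw [Subsingleton.elim x y]
  -- finsum reduction
  have hfinH : (∑ᶠ k : ℤ, (finrank ℤ (Hk f ν k) : ℤ))
      = ∑ k ∈ S, (finrank ℤ (Hk f ν k) : ℤ) := by
    apply finsum_eq_sum_of_support_subset
    intro k hk
    by_contra hkS
    haveI := hsubH k hkS
    apply hk
    simp [Module.finrank_zero_of_subsingleton (M := Hk f ν k)]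
  have hfincoH : (∑ᶠ k : ℤ, (finrank ℤ (coHk f ν k) : ℤ))
      = ∑ k ∈ S, (finrank ℤ (coHk f ν k) : ℤ) := by
    apply finsum_eq_sum_of_support_subset
    intro k hk
    by_contra hkS
    haveI := hsubcoH k hkS
    apply hk
    simp [Module.finrank_zero_of_subsingleton (M := coHk f ν k)]
  -- shifting the sums
  have hshift_down : (∑ k ∈ S, finrank ℤ (LinearMap.range (dmap f ν (k + 1) k)))
      = ∑ k ∈ S, finrank ℤ (LinearMap.range (dmap f ν k (k - 1))) := by
    have hinj : ∀ x ∈ S, ∀ y ∈ S, x + 1 = y + 1 → x = y := by intros; omega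
    have h1 : (∑ k ∈ S, finrank ℤ (LinearMap.range (dmap f ν (k + 1) k)))
        = ∑ b ∈ S.image (· + 1), finrank ℤ (LinearMap.range (dmap f ν b (b - 1))) := by
      rw [Finset.sum_image hinj]
      refine Finset.sum_congr rfl fun k _ => ?_
      have : k + 1 - 1 = k := by ring
      rw [this]
    rw [h1]
    have h2 : (∑ b ∈ S.image (· + 1), finrank ℤ (LinearMap.range (dmap f ν b (b - 1))))
        = ∑ b ∈ S ∪ S.image (· + 1), finrank ℤ (LinearMap.range (dmap f ν b (b - 1))) := by
      apply Finset.sum_subset Finset.subset_union_right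
      intro b _ hb
      apply hr_cod
      intro hbS
      exact hb (Finset.mem_image.mpr ⟨b - 1, hbS, by ring⟩)
    have h3 : (∑ b ∈ S, finrank ℤ (LinearMap.range (dmap f ν b (b - 1))))
        = ∑ b ∈ S ∪ S.image (· + 1), finrank ℤ (LinearMap.range (dmap f ν b (b - 1))) := by
      apply Finset.sum_subset Finset.subset_union_left
      intro b hbu hb
      exact hr_dom b (b - 1) hb
    rw [h2, h3]
  have hshift_up : (∑ k ∈ S, finrank ℤ (LinearMap.range (dmap f ν (k - 1) k)))
      = ∑ k ∈ S, finrank ℤ (LinearMap.range (dmap f ν k (k + 1))) := by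
    have hinj : ∀ x ∈ S, ∀ y ∈ S, x - 1 = y - 1 → x = y := by intros; omega
    have h1 : (∑ k ∈ S, finrank ℤ (LinearMap.range (dmap f ν (k - 1) k)))
        = ∑ b ∈ S.image (· - 1), finrank ℤ (LinearMap.range (dmap f ν b (b + 1))) := by
      rw [Finset.sum_image hinj]
      refine Finset.sum_congr rfl fun k _ => ?_
      have : k - 1 + 1 = k := by ring
      rw [this]
    rw [h1]
    have h2 : (∑ b ∈ S.image (· - 1), finrank ℤ (LinearMap.range (dmap f ν b (b + 1))))
        = ∑ b ∈ S ∪ S.image (· - 1), finrank ℤ (LinearMap.range (dmap f ν b (b + 1))) := by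
      apply Finset.sum_subset Finset.subset_union_right
      intro b _ hb
      apply hr_cod
      intro hbS
      exact hb (Finset.mem_image.mpr ⟨b + 1, hbS, by ring⟩)
    have h3 : (∑ b ∈ S, finrank ℤ (LinearMap.range (dmap f ν b (b + 1))))
        = ∑ b ∈ S ∪ S.image (· - 1), finrank ℤ (LinearMap.range (dmap f ν b (b + 1))) := by
      apply Finset.sum_subset Finset.subset_union_left
      intro b _ hb
      exact hr_dom b (b + 1) hb
    rw [h2, h3]
  -- totals
  have htot_down : (∑ k ∈ S, (finrank ℤ (LinearMap.range (dmap f ν k (k - 1)))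
      + finrank ℤ (LinearMap.ker (dmap f ν k (k - 1))))) = Fintype.card V := by
    rw [Finset.sum_congr rfl fun k _ => hrn_down k]
    exact level_count f
  have htot_up : (∑ k ∈ S, (finrank ℤ (LinearMap.range (dmap f ν k (k + 1)))
      + finrank ℤ (LinearMap.ker (dmap f ν k (k + 1))))) = Fintype.card V := by
    rw [Finset.sum_congr rfl fun k _ => hrn_up k]
    exact level_count f
  rw [Finset.sum_add_distrib] at htot_down htot_up
  -- the Hodge argument
  have hPPf := PP_zero_chain f ν hch
  have hPPg := PP_zero_01 ν g hg01
  have hodf := hodge (Pmat f ν) hPPf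
  have hodg := hodge (Pmat g ν) hPPg
  have hNN : Pmat f ν + (Pmat f ν)ᵀ = Pmat g ν + (Pmat g ν)ᵀ :=
    Pmat_add_transpose_eq ν hnu hsym hgradf hg
  have e1 : (Pmat f ν).rank
      = ∑ k ∈ S, finrank ℤ (LinearMap.range (dmap f ν k (k - 1))) := rank_Pmat_down f ν hsym
  have e2 : (Pmat f ν)ᵀ.rank
      = ∑ k ∈ S, finrank ℤ (LinearMap.range (dmap f ν k (k + 1))) := rank_Pmat_up f ν
  have e3 : (Pmat g ν).rank = A.rank := by
    rw [rank_Pmat_down g ν hsym, rank_Pmat_g_eq_rank_A ν hsym hg01]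
  have key : (∑ k ∈ S, finrank ℤ (LinearMap.range (dmap f ν k (k - 1)))) = A.rank := by
    have := hodf.1
    rw [hNN, hodg.1, e3, e1] at this
    omega
  have key' : (∑ k ∈ S, finrank ℤ (LinearMap.range (dmap f ν k (k + 1)))) = A.rank := by
    rw [← e2, hodf.2, e1, key]
  -- vertex count
  have hcard01 : Fintype.card {v : V // g v = 0} + Fintype.card {v : V // g v = 1}
      = Fintype.card V := by
    have hlc := level_count g
    have hsub : Finset.image g Finset.univ ⊆ ({0, 1} : Finset ℤ) := by
      intro k hk
      obtain ⟨v, _, rfl⟩ := Finset.mem_image.mp hk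
      rcases hg01 v with h | h <;> simp [h]
    have hvan : ∀ k ∈ ({0, 1} : Finset ℤ), k ∉ Finset.image g Finset.univ →
        Fintype.card {v : V // g v = k} = 0 := by
      intro k _ hk
      haveI : IsEmpty {v : V // g v = k} := by
        rw [isEmpty_subtype]
        exact fun v hv => hk (mem_image_of_level g v hv)
      exact Fintype.card_eq_zero
    rw [Finset.sum_subset hsub hvan] at hlc
    rw [show ({0, 1} : Finset ℤ) = insert 0 {1} from rfl, Finset.sum_insert (by norm_num),
      Finset.sum_singleton] at hlc
    exact hlc
  -- final assembly
  constructor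
  · rw [hfinH]
    have hsum : (∑ k ∈ S, (finrank ℤ (Hk f ν k) : ℤ))
        = (∑ k ∈ S, (finrank ℤ (LinearMap.ker (dmap f ν k (k - 1))) : ℤ))
          - ∑ k ∈ S, (finrank ℤ (LinearMap.range (dmap f ν (k + 1) k)) : ℤ) := by
      rw [← Finset.sum_sub_distrib]
      refine Finset.sum_congr rfl fun k _ => ?_
      have := hHk k
      omega
    rw [hsum]
    have H1 : (∑ k ∈ S, (finrank ℤ (LinearMap.range (dmap f ν k (k - 1))) : ℤ))
        + ∑ k ∈ S, (finrank ℤ (LinearMap.ker (dmap f ν k (k - 1))) : ℤ)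
        = (Fintype.card V : ℤ) := by exact_mod_cast htot_down
    have H2 : (∑ k ∈ S, (finrank ℤ (LinearMap.range (dmap f ν (k + 1) k)) : ℤ))
        = ∑ k ∈ S, (finrank ℤ (LinearMap.range (dmap f ν k (k - 1))) : ℤ) := by
      exact_mod_cast hshift_down
    have H3 : (∑ k ∈ S, (finrank ℤ (LinearMap.range (dmap f ν k (k - 1))) : ℤ))
        = (A.rank : ℤ) := by exact_mod_cast key
    have H4 : (Fintype.card {v : V // g v = 0} : ℤ) + (Fintype.card {v : V // g v = 1} : ℤ)
        = (Fintype.card V : ℤ) := by exact_mod_cast hcard01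
    linarith
  · rw [hfincoH]
    have hsum : (∑ k ∈ S, (finrank ℤ (coHk f ν k) : ℤ))
        = (∑ k ∈ S, (finrank ℤ (LinearMap.ker (dmap f ν k (k + 1))) : ℤ))
          - ∑ k ∈ S, (finrank ℤ (LinearMap.range (dmap f ν (k - 1) k)) : ℤ) := by
      rw [← Finset.sum_sub_distrib]
      refine Finset.sum_congr rfl fun k _ => ?_
      have := hcoHk k
      omega
    rw [hsum]
    have H1 : (∑ k ∈ S, (finrank ℤ (LinearMap.range (dmap f ν k (k + 1))) : ℤ))
        + ∑ k ∈ S, (finrank ℤ (LinearMap.ker (dmap f ν k (k + 1))) : ℤ)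
        = (Fintype.card V : ℤ) := by exact_mod_cast htot_up
    have H2 : (∑ k ∈ S, (finrank ℤ (LinearMap.range (dmap f ν (k - 1) k)) : ℤ))
        = ∑ k ∈ S, (finrank ℤ (LinearMap.range (dmap f ν k (k + 1))) : ℤ) := by
      exact_mod_cast hshift_up
    have H3 : (∑ k ∈ S, (finrank ℤ (LinearMap.range (dmap f ν k (k + 1))) : ℤ))
        = (A.rank : ℤ) := by exact_mod_cast key'
    have H4 : (Fintype.card {v : V // g v = 0} : ℤ) + (Fintype.card {v : V // g v = 1} : ℤ)
        = (Fintype.card V : ℤ) := by exact_mod_cast hcard01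
    linarith

end Main
end

section
/- Let (G,ν) be a connected deformation graph with more than one vertex. Then the two distance components of any representation gradation of G have the same cardinality; equivalently, every representation matrix of (G,ν) is a square matrix. -/
/-- A deformable connection: `∑_c ν a c * ν c b = 0` for all vertices at distance 2. -/
def IsDeformable {V : Type*} [Fintype V] (G : SimpleGraph V) (ν : V → V → ℤ) : Prop :=
  ∀ a b : V, G.dist a b = 2 → (∑ c : V, ν a c * ν c b) = 0

open SimpleGraph Matrix

namespace IsConnection

variable {V : Type*} {G : SimpleGraph V} {ν : V → V → ℤ}

theorem adj_of_mul_ne_zero (hν : IsConnection G ν) {a b c : V} (h : ν a c * ν c b ≠ 0) :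
    G.Adj a c ∧ G.Adj c b :=
  ⟨(hν.2 a c).mp (left_ne_zero_of_mul h), (hν.2 c b).mp (right_ne_zero_of_mul h)⟩

variable [Fintype V]

theorem sum_mul_self_pos (hν : IsConnection G ν) {a b : V} (hab : G.Adj a b) :
    0 < ∑ c, ν a c * ν c a := by
  refine Finset.sum_pos' (fun c _ => hν.1 c a ▸ mul_self_nonneg _) ⟨b, Finset.mem_univ b, ?_⟩
  rw [hν.1 b a]
  exact mul_self_pos.mpr ((hν.2 a b).mpr hab)

theorem sum_mul_eq_zero_of_not_adj (hν : IsConnection G ν) (hdef : IsDeformable G ν) {a b : V}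
    (hne : a ≠ b) (hnadj : ¬ G.Adj a b) : ∑ c, ν a c * ν c b = 0 := by
  by_cases hdist : G.dist a b = 2
  · exact hdef a b hdist
  refine Finset.sum_eq_zero fun c _ => ?_
  by_contra hc
  obtain ⟨hac, hcb⟩ := hν.adj_of_mul_ne_zero hc
  have hle : G.dist a b ≤ 2 := by simpa using dist_le (hac.toWalk.append hcb.toWalk)
  have hpos : 0 < G.dist a b := (hac.reachable.trans hcb.reachable).pos_dist_of_ne hne
  have hne_one : G.dist a b ≠ 1 := fun h => hnadj (dist_eq_one_iff_adj.mp h)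
  omega

end IsConnection

theorem Matrix.card_le_card_of_isUnit_mul {m n R : Type*} [Fintype m] [Fintype n]
    [DecidableEq m] [CommRing R] [StrongRankCondition R] (A : Matrix m n R) (B : Matrix n m R)
    (h : IsUnit (A * B)) : Fintype.card m ≤ Fintype.card n :=
  calc Fintype.card m = (A * B).rank := (rank_of_isUnit _ h).symm
    _ ≤ A.rank := rank_mul_le_left A B
    _ ≤ Fintype.card n := rank_le_card_width A

def representationMatrix {V : Type*} (ν : V → V → ℤ) (s t : Set V) : Matrix s t ℚ :=
  fun a b => ν a b

section Bipartite

variable {V : Type*} [Fintype V] {G : SimpleGraph V} {ν : V → V → ℤ} {s t : Set V}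

theorem IsConnection.sum_subtype_mul_eq_sum_mul (hν : IsConnection G ν)
    (hst : G.IsBipartiteWith s t) [Fintype t] {a : V} (ha : a ∈ s) (b : V) :
    ∑ c : t, ν a c * ν c b = ∑ c, ν a c * ν c b := by
  classical
  rw [← Finset.sum_subtype (Finset.univ.filter (· ∈ t)) (by simp) (fun c => ν a c * ν c b)]
  exact Finset.sum_filter_of_ne fun c _ hc =>
    hst.mem_of_mem_adj ha (hν.adj_of_mul_ne_zero hc).1

theorem representationMatrix_mul_transpose (hν : IsConnection G ν) (hdef : IsDeformable G ν)
    (hst : G.IsBipartiteWith s t) [Fintype t] [DecidableEq s] :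
    representationMatrix ν s t * (representationMatrix ν s t)ᵀ =
      diagonal fun a : s => ((∑ c, ν a c * ν c a : ℤ) : ℚ) := by
  ext a b
  have hentry : ∑ c : t, (ν a c : ℚ) * ν b c = ((∑ c, ν a c * ν c b : ℤ) : ℚ) := by
    rw [← hν.sum_subtype_mul_eq_sum_mul hst a.2 b]
    push_cast
    simp only [hν.1 b]
  simp only [Matrix.mul_apply, transpose_apply, representationMatrix, diagonal_apply, hentry]
  split_ifs with hab
  · rw [hab]
  have hne : (a : V) ≠ b := Subtype.coe_injective.ne hab
  have hnadj : ¬ G.Adj a b := fun h =>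
    Set.disjoint_left.mp hst.disjoint b.2 (hst.mem_of_mem_adj a.2 h)
  exact_mod_cast hν.sum_mul_eq_zero_of_not_adj hdef hne hnadj

theorem card_le_card_of_isBipartiteWith (hν : IsConnection G ν) (hdef : IsDeformable G ν)
    (hst : G.IsBipartiteWith s t) (hs : ∀ a ∈ s, ∃ b, G.Adj a b) : Nat.card s ≤ Nat.card t := by
  classical
  have hunit : IsUnit (representationMatrix ν s t * (representationMatrix ν s t)ᵀ) := by
    rw [representationMatrix_mul_transpose hν hdef hst, isUnit_diagonal, Pi.isUnit_iff]
    intro a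
    obtain ⟨b, hab⟩ := hs a a.2
    exact isUnit_iff_ne_zero.mpr (by exact_mod_cast (hν.sum_mul_self_pos hab).ne')
  simpa only [Nat.card_eq_fintype_card] using
    (representationMatrix ν s t).card_le_card_of_isUnit_mul _ hunit

end Bipartite

theorem IsGradation.isBipartiteWith {V : Type*} {G : SimpleGraph V} {g : V → ℤ}
    (hg : IsGradation G g) (hg01 : ∀ v, g v = 0 ∨ g v = 1) :
    G.IsBipartiteWith {v | g v = 0} {v | g v = 1} where
  disjoint := Set.disjoint_left.mpr fun v (h0 : g v = 0) (h1 : g v = 1) => by omega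
  mem_of_adj a b hab := by
    have := hg hab
    have := hg01 a
    have := hg01 b
    simp only [Set.mem_ofPred_eq]
    omega

theorem representation_matrix_is_square_general
    {V : Type*} [Fintype V] (G : SimpleGraph V) (ν : V → V → ℤ)
    (hcon : IsConnection G ν) (hdef : IsDeformable G ν)
    (hconn : G.Connected) (hcard : 1 < Fintype.card V)
    (g : V → ℤ) (hg : IsGradation G g) (hg01 : ∀ v : V, g v = 0 ∨ g v = 1) :
    Fintype.card {v : V // g v = 0} = Fintype.card {v : V // g v = 1} := by
  have : Nontrivial V := Fintype.one_lt_card_iff_nontrivial.mp hcard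
  have hnbr : ∀ a, ∃ b, G.Adj a b := hconn.preconnected.exists_adj_of_nontrivial
  have hbip := hg.isBipartiteWith hg01
  simp only [Fintype.card_eq_nat_card]
  exact le_antisymm (card_le_card_of_isBipartiteWith hcon hdef hbip fun a _ => hnbr a)
    (card_le_card_of_isBipartiteWith hcon hdef hbip.symm fun a _ => hnbr a)

/-- For a connected deformation graph with more than one vertex, the two distance
components of any representation gradation have the same cardinality, i.e. every
representation matrix is square. -/
theorem representation_matrix_is_square
    {V : Type*} [Fintype V] [DecidableEq V] (G : SimpleGraph V) (ν : V → V → ℤ)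
    (hcon : IsConnection G ν) (hdef : IsDeformable G ν)
    (hconn : G.Connected) (hcard : 1 < Fintype.card V)
    (g : V → ℤ) (hg : IsGradation G g) (hg01 : ∀ v : V, g v = 0 ∨ g v = 1) :
    Fintype.card {v : V // g v = 0} = Fintype.card {v : V // g v = 1} :=
  representation_matrix_is_square_general G ν hcon hdef hconn hcard g hg hg01
end

section
/- Let (G,ν) be a connected deformation graph. Then all vertices of G have the same rank: r(u) = r(v) for all vertices u, v, where r(v) = Σ_{w∈V} ν(w,v)². This common value is called the rank of (G,ν). -/
/-- In a connected deformation graph all vertices have the same rank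
`r(v) = ∑_w ν(w,v)²`. -/
theorem rank_constant_on_connected_deformation_graph
    {V : Type*} [Fintype V] (G : SimpleGraph V) (ν : V → V → ℤ)
    (hgradable : ∃ f : V → ℤ, IsGradation G f)
    (hcon : IsConnection G ν) (hdef : IsDeformable G ν) (hconn : G.Connected) :
    ∀ u v : V, (∑ w : V, ν w u ^ 2) = ∑ w : V, ν w v ^ 2 := by
  obtain ⟨f, hf⟩ := hgradable
  obtain ⟨hsym, hadj⟩ := hcon
  -- the matrix N² is diagonal
  have key : ∀ a b : V, a ≠ b → (∑ c : V, ν a c * ν c b) = 0 := by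
    intro a b hne
    by_cases hall : ∀ c ∈ Finset.univ, ν a c * ν c b = 0
    · exact Finset.sum_eq_zero hall
    · push_neg at hall
      obtain ⟨c, -, hc⟩ := hall
      have hac : G.Adj a c := (hadj a c).1 (left_ne_zero_of_mul hc)
      have hcb : G.Adj c b := (hadj c b).1 (right_ne_zero_of_mul hc)
      by_cases hab : G.Adj a b
      · -- parity contradiction: each term vanishes
        exfalso
        rcases hf hac with h1 | h1 <;> rcases hf hcb with h2 | h2 <;>
          rcases hf hab with h3 | h3 <;> omega
      · -- distance is exactly 2
        have hd : G.dist a b = 2 := by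
          have hle : G.dist a b ≤ 2 := by
            have := SimpleGraph.dist_le ((hac.toWalk.concat hcb) : G.Walk a b)
            simpa using this
          have hr : G.Reachable a b := ⟨hac.toWalk.concat hcb⟩
          have h0 : G.dist a b ≠ 0 := by
            intro h
            exact hne (hr.dist_eq_zero_iff.mp h)
          have h1 : G.dist a b ≠ 1 := by
            intro h
            exact hab ((G.dist_eq_one_iff_adj).mp h)
          omega
        exact hdef a b hd
  -- diagonal entries are the ranks
  have diag : ∀ a : V, (∑ c : V, ν a c * ν c a) = ∑ w : V, ν w a ^ 2 := by
    intro a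
    refine Finset.sum_congr rfl fun c _ => ?_
    rw [hsym a c, sq]
  -- adjacent vertices have equal rank
  have step : ∀ u v : V, G.Adj u v → (∑ w : V, ν w u ^ 2) = ∑ w : V, ν w v ^ 2 := by
    intro u v huv
    have hassoc : (∑ c : V, (∑ w : V, ν u w * ν w c) * ν c v)
        = ∑ w : V, ν u w * ∑ c : V, ν w c * ν c v := by
      simp_rw [Finset.sum_mul, Finset.mul_sum, mul_assoc]
      exact Finset.sum_comm
    have hL : (∑ c : V, (∑ w : V, ν u w * ν w c) * ν c v)
        = (∑ w : V, ν w u ^ 2) * ν u v := by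
      rw [Finset.sum_eq_single u]
      · rw [diag u]
      · intro c _ hne
        rw [key u c (Ne.symm hne), zero_mul]
      · simp
    have hR : (∑ w : V, ν u w * ∑ c : V, ν w c * ν c v)
        = ν u v * ∑ w : V, ν w v ^ 2 := by
      rw [Finset.sum_eq_single v]
      · rw [diag v]
      · intro w _ hne
        rw [key w v hne, mul_zero]
      · simp
    have hne : ν u v ≠ 0 := (hadj u v).2 huv
    have := hL.symm.trans (hassoc.trans hR)
    rw [mul_comm] at this
    exact mul_left_cancel₀ hne this
  intro u v
  obtain ⟨p⟩ := hconn.preconnected u v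
  induction p with
  | nil => rfl
  | cons h p ih => exact (step _ _ h).trans ih
end

section
/- Let (G,f₁,ν) be a chain graph with G connected and ν a deformable connection such that every vertex has rank Σ_{w∈V} ν(w,v)² equal to a fixed n > 0. Let v be a bottom vertex of (G,f₁) with f₁(v) = q and let f₂ be the lifting of f₁ at v. Then there exists a positive divisor k of n such that: (i) the homology group H_q of the f₂-complex is isomorphic to the quotient of H_q of the f₁-complex by a cyclic subgroup of order k; (ii) there is an injective homomorphism from H_{q+1} of the f₁-complex into H_{q+1} of the f₂-complex whose cokernel is cyclic of order n/k; and (iii) H_i of the f₁-complex is isomorphic to H_i of the f₂-complex for every i ≠ q, q+1. -/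
namespace CGLift

set_option linter.unusedSectionVars false

variable {V : Type*} [Fintype V] [DecidableEq V]

/-- extension by zero to the ambient space `V → ℤ`. -/
def toV (P : V → Prop) [DecidablePred P] : ({w : V // P w} → ℤ) →ₗ[ℤ] (V → ℤ) where
  toFun x u := if h : P u then x ⟨u, h⟩ else 0
  map_add' x y := by funext u; by_cases h : P u <;> simp [h]
  map_smul' c x := by funext u; by_cases h : P u <;> simp [h]

lemma toV_apply (P : V → Prop) [DecidablePred P] (x) (u : V) :
    toV P x u = if h : P u then x ⟨u, h⟩ else 0 := rfl

lemma toV_pos {P : V → Prop} [DecidablePred P] (x) {u : V} (h : P u) :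
    toV P x u = x ⟨u, h⟩ := dif_pos h

lemma toV_neg {P : V → Prop} [DecidablePred P] (x) {u : V} (h : ¬ P u) :
    toV P x u = 0 := dif_neg h

lemma toV_inj {P : V → Prop} [DecidablePred P] {x y : {w : V // P w} → ℤ}
    (h : toV P x = toV P y) : x = y := by
  funext w
  have := congrFun h w.1
  rwa [toV_pos x w.2, toV_pos y w.2] at this

/-- transport between subtype function spaces. -/
def ext0 (P Q : V → Prop) [DecidablePred P] :
    ({w : V // P w} → ℤ) →ₗ[ℤ] ({w : V // Q w} → ℤ) :=
  (LinearMap.funLeft ℤ ℤ (Subtype.val)).comp (toV P)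

lemma ext0_apply (P Q : V → Prop) [DecidablePred P] (x) (w : {w : V // Q w}) :
    ext0 P Q x w = toV P x w.1 := rfl

lemma toV_ext0 {P Q : V → Prop} [DecidablePred P] [DecidablePred Q]
    (hPQ : ∀ u, P u → Q u) (x) : toV Q (ext0 P Q x) = toV P x := by
  funext u
  by_cases h : Q u
  · rw [toV_pos _ h]; rfl
  · rw [toV_neg _ h, toV_neg]; exact fun hp => h (hPQ u hp)

lemma ext0_ext0 {P Q : V → Prop} [DecidablePred P] [DecidablePred Q]
    (hPQ : ∀ u, P u ↔ Q u) (x) : ext0 Q P (ext0 P Q x) = x := by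
  apply toV_inj
  rw [toV_ext0 (fun u => (hPQ u).2)]
  exact toV_ext0 (fun u => (hPQ u).1) x

lemma dmap_toV (f : V → ℤ) (ν : V → V → ℤ) (j k : ℤ) (x) (w : V) :
    toV (fun w => f w = k) (dmap f ν j k x) w
      = if f w = k then ∑ u : V, ν u w * toV (fun u => f u = j) x u else 0 := by
  rw [toV_apply]
  by_cases h : f w = k
  · rw [dif_pos h, if_pos h]
    show (Matrix.of fun (w : {v : V // f v = k}) (u : {v : V // f v = j}) => ν u.1 w.1).mulVec
      x ⟨w, h⟩ = _
    rw [Matrix.mulVec, dotProduct]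
    calc (∑ i : {v : V // f v = j},
            Matrix.of (fun (w : {v : V // f v = k}) (u : {v : V // f v = j}) => ν u.1 w.1)
              ⟨w, h⟩ i * x i)
        = ∑ i : {v : V // f v = j}, ν i.1 w * toV (fun u => f u = j) x i.1 :=
          Finset.sum_congr rfl (fun i _ => by rw [toV_pos (P := fun u => f u = j) x i.2]; rfl)
      _ = ∑ u ∈ Finset.univ.filter (fun u => f u = j), ν u w * toV (fun u => f u = j) x u :=
          (Finset.sum_subtype (Finset.univ.filter (fun u => f u = j)) (fun u => by simp) (fun u => ν u w * toV (fun u => f u = j) x u)).symm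
      _ = ∑ u : V, ν u w * toV (fun u => f u = j) x u := by
          rw [Finset.sum_filter]
          refine Finset.sum_congr rfl fun u _ => ?_
          by_cases hu : f u = j
          · rw [if_pos hu]
          · rw [if_neg hu, toV_neg (P := fun u => f u = j) x hu, mul_zero]
  · rw [dif_neg h, if_neg h]

lemma mem_ker_iff (f : V → ℤ) (ν : V → V → ℤ) (j k : ℤ) (x) :
    x ∈ LinearMap.ker (dmap f ν j k)
      ↔ ∀ w : V, f w = k → ∑ u : V, ν u w * toV (fun u => f u = j) x u = 0 := by
  rw [LinearMap.mem_ker]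
  constructor
  · intro h w hw
    have := dmap_toV f ν j k x w
    rw [h, if_pos hw, map_zero] at this
    exact this.symm
  · intro h
    apply toV_inj (P := fun w => f w = k)
    rw [map_zero]
    funext w
    rw [dmap_toV]
    by_cases hw : f w = k
    · rw [if_pos hw, h w hw]; rfl
    · rw [if_neg hw]; rfl

lemma dmap_eq_iff {f : V → ℤ} {ν : V → V → ℤ} {j k : ℤ}
    (y : {w : V // f w = j} → ℤ) (x : {w : V // f w = k} → ℤ) :
    dmap f ν j k y = x
      ↔ ∀ (w : V) (hw : f w = k),
          (∑ u : V, ν u w * toV (fun u => f u = j) y u) = x ⟨w, hw⟩ := by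
  constructor
  · intro h w hw
    have := dmap_toV f ν j k y w
    rw [h, if_pos hw, toV_pos (P := fun w => f w = k) x hw] at this
    exact this.symm
  · intro h
    apply toV_inj (P := fun w => f w = k)
    funext w
    rw [dmap_toV]
    by_cases hw : f w = k
    · rw [if_pos hw, h w hw, toV_pos (P := fun w => f w = k) x hw]
    · rw [if_neg hw, toV_neg (P := fun w => f w = k) x hw]

lemma ext0_inj {P Q : V → Prop} [DecidablePred P] [DecidablePred Q]
    (hPQ : ∀ u, P u → Q u) : Function.Injective (ext0 P Q (V := V)) := by
  intro x y h
  apply toV_inj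
  rw [← toV_ext0 hPQ x, ← toV_ext0 hPQ y, h]

lemma toV_ext0' (P Q : V → Prop) [DecidablePred P] [DecidablePred Q] (x) (u : V) :
    toV Q (ext0 P Q x) u = if Q u then toV P x u else 0 := by
  by_cases h : Q u
  · rw [if_pos h, toV_pos (P := Q) _ h]; rfl
  · rw [if_neg h, toV_neg (P := Q) _ h]

/-- All the arithmetic facts about the connection around the lifted vertex `v`. -/
structure Setup (f₁ f₂ : V → ℤ) (ν : V → V → ℤ) (v : V) (n : ℕ) : Prop where
  hsym : ∀ a b, ν a b = ν b a
  vlev : ∀ w, ν v w ≠ 0 → f₁ w = f₁ v + 1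
  rankv : (∑ u : V, ν v u * ν u v) = (n : ℤ)
  orth : ∀ w, w ≠ v → f₁ w = f₁ v → (∑ u : V, ν v u * ν u w) = 0
  ddv : ∀ c, f₁ c = f₁ v + 2 → (∑ u : V, ν v u * ν u c) = 0
  npos : 0 < n
  h2v : f₂ v = f₁ v + 2
  h2 : ∀ w, w ≠ v → f₂ w = f₁ w

namespace Setup

variable {f₁ f₂ : V → ℤ} {ν : V → V → ℤ} {v : V} {n : ℕ}
variable (S : Setup f₁ f₂ ν v n)
include S

lemma vlev' : ∀ w, ν w v ≠ 0 → f₁ w = f₁ v + 1 := by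
  intro w h
  exact S.vlev w (by rw [S.hsym v w]; exact h)

lemma lev_iff {j : ℤ} (h1 : j ≠ f₁ v) (h2 : j ≠ f₁ v + 2) (w : V) :
    f₂ w = j ↔ f₁ w = j := by
  by_cases hw : w = v
  · subst hw
    constructor
    · intro h; rw [S.h2v] at h; omega
    · intro h; omega
  · rw [S.h2 w hw]

lemma levq (w : V) : f₂ w = f₁ v ↔ (f₁ w = f₁ v ∧ w ≠ v) := by
  by_cases hw : w = v
  · subst hw
    rw [S.h2v]
    constructor
    · intro h; omega
    · rintro ⟨-, h⟩; exact absurd rfl h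
  · rw [S.h2 w hw]; exact ⟨fun h => ⟨h, hw⟩, fun h => h.1⟩

lemma levq2 (w : V) : f₂ w = f₁ v + 2 ↔ (f₁ w = f₁ v + 2 ∨ w = v) := by
  by_cases hw : w = v
  · subst hw
    simp [S.h2v]
  · rw [S.h2 w hw]
    exact ⟨fun h => Or.inl h, fun h => h.resolve_right hw⟩

end Setup
section Elements

variable {V : Type*} [Fintype V] [DecidableEq V]

/-- The generator at `v` on level `k = f₁ v`. -/
def vhatG (f₁ : V → ℤ) (v : V) {k : ℤ} (h : f₁ v = k) : {w : V // f₁ w = k} → ℤ :=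
  Pi.single ⟨v, h⟩ 1

/-- The row of the connection at `v`, on level `j`. -/
def alphaG (f₁ : V → ℤ) (ν : V → V → ℤ) (v : V) (j : ℤ) : {w : V // f₁ w = j} → ℤ :=
  fun u => ν v u.1

/-- The functional `x ↦ ∑ u, ν u v * x u` on level `j` of `f₂`. -/
noncomputable def betaG (f₁ f₂ : V → ℤ) (ν : V → V → ℤ) (v : V) (j : ℤ) {k : ℤ}
    (h : f₁ v = k) : ({w : V // f₂ w = j} → ℤ) →ₗ[ℤ] ℤ :=
  (LinearMap.proj (⟨v, h⟩ : {w : V // f₁ w = k})).comp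
    ((dmap f₁ ν j k).comp (ext0 (fun w => f₂ w = j) (fun w => f₁ w = j)))

variable {f₁ f₂ : V → ℤ} {ν : V → V → ℤ} {v : V} {n : ℕ}

lemma toV_vhatG {k : ℤ} (h : f₁ v = k) (u : V) :
    toV (fun w => f₁ w = k) (vhatG f₁ v h) u = if u = v then 1 else 0 := by
  by_cases hu : f₁ u = k
  · rw [toV_pos (P := fun w => f₁ w = k) _ hu]
    unfold vhatG
    rw [Pi.single_apply]
    simp [Subtype.ext_iff]
  · rw [toV_neg (P := fun w => f₁ w = k) _ hu, if_neg]
    intro e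
    exact hu (e ▸ h)

namespace Setup

variable (S : Setup f₁ f₂ ν v n)
include S

lemma toV_alphaG {j : ℤ} (hj : j = f₁ v + 1) (u : V) :
    toV (fun w => f₁ w = j) (alphaG f₁ ν v j) u = ν v u := by
  by_cases hu : f₁ u = j
  · rw [toV_pos (P := fun w => f₁ w = j) _ hu]; rfl
  · rw [toV_neg (P := fun w => f₁ w = j) _ hu]
    by_contra hne
    exact hu (by rw [S.vlev u (Ne.symm hne)]; omega)

lemma toV_ext0_eq {j : ℤ} (hj1 : j ≠ f₁ v) (hj2 : j ≠ f₁ v + 2)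
    (x : {w : V // f₂ w = j} → ℤ) :
    toV (fun w => f₁ w = j) (ext0 (fun w => f₂ w = j) (fun w => f₁ w = j) x)
      = toV (fun w => f₂ w = j) x :=
  toV_ext0 (fun u hu => (S.lev_iff hj1 hj2 u).mp hu) x

lemma betaG_apply {j k : ℤ} (hj : j = f₁ v + 1) (hk : f₁ v = k)
    (x : {w : V // f₂ w = j} → ℤ) :
    betaG f₁ f₂ ν v j hk x = ∑ u : V, ν u v * toV (fun u => f₂ u = j) x u := by
  show (dmap f₁ ν j k (ext0 _ _ x)) ⟨v, hk⟩ = _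
  have h := dmap_toV f₁ ν j k (ext0 (fun w => f₂ w = j) (fun w => f₁ w = j) x) v
  rw [toV_pos (P := fun w => f₁ w = k) _ hk, if_pos hk] at h
  rw [h, S.toV_ext0_eq (by omega) (by omega) x]

lemma d_alphaG {j k : ℤ} (hj : j = f₁ v + 1) (hk : f₁ v = k) :
    dmap f₁ ν j k (alphaG f₁ ν v j) = (n : ℤ) • vhatG f₁ v hk := by
  rw [dmap_eq_iff]
  intro w hw
  have hval : ((n : ℤ) • vhatG f₁ v hk) ⟨w, hw⟩
      = (n : ℤ) * (if w = v then 1 else 0) := by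
    rw [Pi.smul_apply, smul_eq_mul]
    congr 1
    have := toV_vhatG hk w
    rw [toV_pos (P := fun w => f₁ w = k) _ hw] at this
    exact this
  rw [hval]
  calc (∑ u : V, ν u w * toV (fun u => f₁ u = j) (alphaG f₁ ν v j) u)
      = ∑ u : V, ν v u * ν u w := by
        refine Finset.sum_congr rfl fun u _ => ?_
        rw [S.toV_alphaG hj u]; ring
    _ = (n : ℤ) * (if w = v then 1 else 0) := by
        by_cases hwv : w = v
        · subst hwv
          rw [if_pos rfl, mul_one, S.rankv]
        · rw [if_neg hwv, mul_zero]
          exact S.orth w hwv (by omega)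

lemma key {j k : ℤ} (hj : j = f₁ v + 1) (hk : f₁ v = k)
    (x : {w : V // f₂ w = j} → ℤ) :
    dmap f₁ ν j k (ext0 (fun w => f₂ w = j) (fun w => f₁ w = j) x)
      = betaG f₁ f₂ ν v j hk x • vhatG f₁ v hk
        + ext0 (fun w => f₂ w = k) (fun w => f₁ w = k) (dmap f₂ ν j k x) := by
  rw [dmap_eq_iff]
  intro w hw
  rw [Pi.add_apply, Pi.smul_apply, smul_eq_mul]
  have hvh : (vhatG f₁ v hk) ⟨w, hw⟩ = if w = v then 1 else 0 := by
    have := toV_vhatG hk w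
    rwa [toV_pos (P := fun w => f₁ w = k) _ hw] at this
  have hext : (ext0 (fun w => f₂ w = k) (fun w => f₁ w = k) (dmap f₂ ν j k x)) ⟨w, hw⟩
      = toV (fun w => f₂ w = k) (dmap f₂ ν j k x) w := rfl
  rw [hvh, hext, dmap_toV, S.toV_ext0_eq (by omega) (by omega) x]
  by_cases hwv : w = v
  · subst hwv
    rw [if_pos rfl, mul_one, if_neg (by rw [S.h2v]; omega), add_zero,
      S.betaG_apply hj hk x]
  · rw [if_neg hwv, mul_zero, zero_add, if_pos (by rw [S.h2 w hwv]; omega)]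

lemma d2_ext0_top {j k : ℤ} (hj : j = f₁ v + 2) (hk : k = f₁ v + 1)
    (y : {w : V // f₁ w = j} → ℤ) :
    dmap f₂ ν j k (ext0 (fun w => f₁ w = j) (fun w => f₂ w = j) y)
      = ext0 (fun w => f₁ w = k) (fun w => f₂ w = k) (dmap f₁ ν j k y) := by
  have htv : toV (fun w => f₂ w = j) (ext0 (fun w => f₁ w = j) (fun w => f₂ w = j) y)
      = toV (fun w => f₁ w = j) y := by
    refine toV_ext0 (fun u hu => ?_) y
    rw [S.h2 u (by rintro rfl; omega)]; exact hu
  rw [dmap_eq_iff]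
  intro w hw
  have hw1 : f₁ w = k := by
    rw [← S.h2 w (by rintro rfl; rw [S.h2v] at hw; omega)]; exact hw
  have hext : (ext0 (fun w => f₁ w = k) (fun w => f₂ w = k) (dmap f₁ ν j k y)) ⟨w, hw⟩
      = toV (fun w => f₁ w = k) (dmap f₁ ν j k y) w := rfl
  rw [hext, dmap_toV, if_pos hw1, htv]

lemma d2_vhat2 {j k : ℤ} (hj : j = f₁ v + 2) (hk : k = f₁ v + 1) (h2 : f₂ v = j) :
    dmap f₂ ν j k (Pi.single (⟨v, h2⟩ : {w : V // f₂ w = j}) (1 : ℤ))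
      = ext0 (fun w => f₁ w = k) (fun w => f₂ w = k) (alphaG f₁ ν v k) := by
  have htv : ∀ u : V, toV (fun w => f₂ w = j) (Pi.single (⟨v, h2⟩ : {w : V // f₂ w = j}) (1 : ℤ)) u
      = if u = v then 1 else 0 := by
    intro u
    by_cases hu : f₂ u = j
    · rw [toV_pos (P := fun w => f₂ w = j) _ hu, Pi.single_apply]
      simp [Subtype.ext_iff]
    · rw [toV_neg (P := fun w => f₂ w = j) _ hu, if_neg]
      intro e
      exact hu (e ▸ h2)
  rw [dmap_eq_iff]
  intro w hw
  have hext : (ext0 (fun w => f₁ w = k) (fun w => f₂ w = k) (alphaG f₁ ν v k)) ⟨w, hw⟩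
      = toV (fun w => f₁ w = k) (alphaG f₁ ν v k) w := rfl
  rw [hext, S.toV_alphaG (by omega) w]
  calc (∑ u : V, ν u w * toV (fun w => f₂ w = j) (Pi.single (⟨v, h2⟩ : {w : V // f₂ w = j}) (1:ℤ)) u)
      = ∑ u : V, if u = v then ν u w else 0 := by
        refine Finset.sum_congr rfl fun u _ => ?_
        rw [htv u]
        by_cases hu : u = v
        · rw [if_pos hu, if_pos hu, mul_one]
        · rw [if_neg hu, if_neg hu, mul_zero]
    _ = ν v w := by rw [Finset.sum_ite_eq' Finset.univ v (fun u => ν u w)]; simp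

lemma decompose_top {j : ℤ} (hj : j = f₁ v + 2) (h2 : f₂ v = j)
    (y' : {w : V // f₂ w = j} → ℤ) :
    y' = ext0 (fun w => f₁ w = j) (fun w => f₂ w = j)
          (ext0 (fun w => f₂ w = j) (fun w => f₁ w = j) y')
        + toV (fun w => f₂ w = j) y' v • Pi.single (⟨v, h2⟩ : {w : V // f₂ w = j}) (1 : ℤ) := by
  apply toV_inj (P := fun w => f₂ w = j)
  rw [map_add, map_smul]
  funext u
  rw [Pi.add_apply, Pi.smul_apply, smul_eq_mul]
  have h1 : toV (fun w => f₂ w = j) (ext0 (fun w => f₁ w = j) (fun w => f₂ w = j)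
      (ext0 (fun w => f₂ w = j) (fun w => f₁ w = j) y')) u
      = if f₂ u = j then (if f₁ u = j then toV (fun w => f₂ w = j) y' u else 0) else 0 := by
    rw [toV_ext0' (fun w => f₁ w = j) (fun w => f₂ w = j) _ u]
    by_cases hu : f₂ u = j
    · rw [if_pos hu, if_pos hu, toV_ext0' (fun w => f₂ w = j) (fun w => f₁ w = j) _ u]
    · rw [if_neg hu, if_neg hu]
  have h2' : ∀ u : V, toV (fun w => f₂ w = j) (Pi.single (⟨v, h2⟩ : {w : V // f₂ w = j}) (1 : ℤ)) u
      = if u = v then 1 else 0 := by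
    intro u
    by_cases hu : f₂ u = j
    · rw [toV_pos (P := fun w => f₂ w = j) _ hu, Pi.single_apply]
      simp [Subtype.ext_iff]
    · rw [toV_neg (P := fun w => f₂ w = j) _ hu, if_neg]
      intro e
      exact hu (e ▸ h2)
  rw [h1, h2' u]
  by_cases huv : u = v
  · subst huv
    rw [if_pos rfl, mul_one, if_pos h2, if_neg (by omega), zero_add]
  · rw [if_neg huv, mul_zero, add_zero]
    by_cases hu : f₂ u = j
    · rw [if_pos hu, if_pos (by rw [← S.h2 u huv]; exact hu)]
    · rw [if_neg hu, toV_neg (P := fun w => f₂ w = j) _ hu]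

lemma sum_nu_v_zero {P : V → Prop} [DecidablePred P]
    (hP : ∀ u, P u → f₁ u ≠ f₁ v + 1) (x : {w : V // P w} → ℤ) :
    (∑ u : V, ν u v * toV P x u) = 0 := by
  refine Finset.sum_eq_zero fun u _ => ?_
  by_cases hz : ν u v = 0
  · rw [hz, zero_mul]
  · have : f₁ u = f₁ v + 1 := S.vlev' u hz
    rw [toV_neg (P := P) _ (fun hPu => hP u hPu this), mul_zero]

lemma dd_v {j m : ℤ} (hj : j = f₁ v + 2) (hm : m = f₁ v + 1)
    (y : {w : V // f₁ w = j} → ℤ) :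
    (∑ u : V, ν u v * toV (fun u => f₁ u = m) (dmap f₁ ν j m y) u) = 0 := by
  calc (∑ u : V, ν u v * toV (fun u => f₁ u = m) (dmap f₁ ν j m y) u)
      = ∑ u : V, ∑ c : V, ν u v * (ν c u * toV (fun w => f₁ w = j) y c) := by
        refine Finset.sum_congr rfl fun u _ => ?_
        rw [dmap_toV]
        by_cases hu : f₁ u = m
        · rw [if_pos hu, Finset.mul_sum]
        · rw [if_neg hu, mul_zero]
          refine (Finset.sum_eq_zero fun c _ => ?_).symm
          have hz : ν u v = 0 := by
            by_contra hz
            exact hu (by rw [S.vlev' u hz]; omega)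
          rw [hz, zero_mul]
    _ = ∑ c : V, toV (fun w => f₁ w = j) y c * (∑ u : V, ν v u * ν u c) := by
        rw [Finset.sum_comm]
        refine Finset.sum_congr rfl fun c _ => ?_
        rw [Finset.mul_sum]
        refine Finset.sum_congr rfl fun u _ => ?_
        rw [S.hsym u v, S.hsym c u]
        ring
    _ = 0 := by
        refine Finset.sum_eq_zero fun c _ => ?_
        by_cases hc : f₁ c = j
        · rw [S.ddv c (by omega), mul_zero]
        · rw [toV_neg (P := fun w => f₁ w = j) _ hc, zero_mul]

lemma d2_ext0_q3 {j k : ℤ} (hj : j = f₁ v + 3) (hk : k = f₁ v + 2)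
    (z : {w : V // f₁ w = j} → ℤ) :
    dmap f₂ ν j k (ext0 (fun w => f₁ w = j) (fun w => f₂ w = j) z)
      = ext0 (fun w => f₁ w = k) (fun w => f₂ w = k) (dmap f₁ ν j k z) := by
  have htv : toV (fun w => f₂ w = j) (ext0 (fun w => f₁ w = j) (fun w => f₂ w = j) z)
      = toV (fun w => f₁ w = j) z := by
    refine toV_ext0 (fun u hu => ?_) z
    rw [S.h2 u (by rintro rfl; omega)]; exact hu
  rw [dmap_eq_iff]
  intro w hw
  have hext : (ext0 (fun w => f₁ w = k) (fun w => f₂ w = k) (dmap f₁ ν j k z)) ⟨w, hw⟩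
      = toV (fun w => f₁ w = k) (dmap f₁ ν j k z) w := rfl
  rw [hext, htv, dmap_toV]
  by_cases hwv : w = v
  · subst hwv
    rw [if_neg (by omega)]
    refine S.sum_nu_v_zero (fun u hu => by omega) z
  · rw [if_pos (by rw [← S.h2 w hwv]; exact hw)]

lemma d1_ext0_down {j k : ℤ} (hj : j = f₁ v) (hk : k = f₁ v - 1)
    (y' : {w : V // f₂ w = j} → ℤ) :
    dmap f₁ ν j k (ext0 (fun w => f₂ w = j) (fun w => f₁ w = j) y')
      = ext0 (fun w => f₂ w = k) (fun w => f₁ w = k) (dmap f₂ ν j k y') := by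
  have htv : toV (fun w => f₁ w = j) (ext0 (fun w => f₂ w = j) (fun w => f₁ w = j) y')
      = toV (fun w => f₂ w = j) y' := by
    refine toV_ext0 (fun u hu => ?_) y'
    rw [← S.h2 u (by rintro rfl; rw [S.h2v] at hu; omega)]; exact hu
  rw [dmap_eq_iff]
  intro w hw
  have hext : (ext0 (fun w => f₂ w = k) (fun w => f₁ w = k) (dmap f₂ ν j k y')) ⟨w, hw⟩
      = toV (fun w => f₂ w = k) (dmap f₂ ν j k y') w := rfl
  rw [hext, htv, dmap_toV, if_pos (by rw [S.h2 w (by rintro rfl; omega)]; exact hw)]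

lemma d1_restrict {j k : ℤ} (hjj : j = f₁ v) (hk : k = f₁ v - 1)
    (z : {w : V // f₁ w = j} → ℤ) :
    dmap f₂ ν j k (ext0 (fun w => f₁ w = j) (fun w => f₂ w = j) z)
      = ext0 (fun w => f₁ w = k) (fun w => f₂ w = k) (dmap f₁ ν j k z) := by
  rw [dmap_eq_iff]
  intro w hw
  have hw1 : f₁ w = k := by rw [← S.h2 w (by rintro rfl; rw [S.h2v] at hw; omega)]; exact hw
  have hext : (ext0 (fun w => f₁ w = k) (fun w => f₂ w = k) (dmap f₁ ν j k z)) ⟨w, hw⟩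
      = toV (fun w => f₁ w = k) (dmap f₁ ν j k z) w := rfl
  rw [hext, dmap_toV, if_pos hw1]
  refine Finset.sum_congr rfl fun u _ => ?_
  rw [toV_ext0' (fun w => f₁ w = j) (fun w => f₂ w = j) z u]
  by_cases hu2 : f₂ u = j
  · rw [if_pos hu2]
  · rw [if_neg hu2]
    by_cases hu1 : f₁ u = j
    · have huv : u = v := by
        by_contra huv
        exact hu2 (by rw [S.h2 u huv]; exact hu1)
      have hz : ν u w = 0 := by
        rw [huv]
        by_contra hz
        have := S.vlev w hz
        omega
      rw [mul_zero, hz, zero_mul]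
    · rw [toV_neg (P := fun w => f₁ w = j) _ hu1, mul_zero]


lemma decompose_q {j : ℤ} (hj : f₁ v = j) (z : {w : V // f₁ w = j} → ℤ) :
    z = ext0 (fun w => f₂ w = j) (fun w => f₁ w = j)
          (ext0 (fun w => f₁ w = j) (fun w => f₂ w = j) z)
        + toV (fun w => f₁ w = j) z v • vhatG f₁ v hj := by
  apply toV_inj (P := fun w => f₁ w = j)
  rw [map_add, map_smul]
  funext u
  rw [Pi.add_apply, Pi.smul_apply, smul_eq_mul]
  rw [toV_ext0' (fun w => f₂ w = j) (fun w => f₁ w = j) _ u]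
  have h1 : toV (fun w => f₂ w = j) (ext0 (fun w => f₁ w = j) (fun w => f₂ w = j) z) u
      = if f₂ u = j then toV (fun w => f₁ w = j) z u else 0 :=
    toV_ext0' _ _ z u
  rw [toV_vhatG hj u]
  by_cases huv : u = v
  · subst huv
    rw [if_pos rfl, mul_one]
    by_cases hu : f₁ u = j
    · rw [if_pos hu, h1, if_neg (by rw [S.h2v]; omega), zero_add,
        toV_pos (P := fun w => f₁ w = j) _ hu]
    · exact absurd hj (by rwa [← hj] at hu ⊢ <;> exact hu)
  · rw [if_neg huv, mul_zero, add_zero]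
    by_cases hu : f₁ u = j
    · rw [if_pos hu, h1, if_pos (by rw [S.h2 u huv]; exact hu)]
    · rw [if_neg hu, toV_neg (P := fun w => f₁ w = j) _ hu]

lemma d_vhat_zero {j k : ℤ} (hj : f₁ v = j) (hk : k = f₁ v - 1) :
    dmap f₁ ν j k (vhatG f₁ v hj) = 0 := by
  rw [dmap_eq_iff]
  intro w hw
  have : (∑ u : V, ν u w * toV (fun w => f₁ w = j) (vhatG f₁ v hj) u)
      = ∑ u : V, if u = v then ν u w else 0 := by
    refine Finset.sum_congr rfl fun u _ => ?_
    rw [toV_vhatG hj u]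
    by_cases hu : u = v
    · rw [if_pos hu, if_pos hu, mul_one]
    · rw [if_neg hu, if_neg hu, mul_zero]
  rw [this, Finset.sum_ite_eq' Finset.univ v (fun u => ν u w)]
  have hz : ν v w = 0 := by
    by_contra hz
    have := S.vlev w hz
    omega
  simp [hz]

end Setup

section Generic

variable {f₁ f₂ : V → ℤ} {ν : V → V → ℤ}

lemma ker_iff_gen {j k : ℤ} (h1 : ∀ w, f₂ w = j ↔ f₁ w = j) (h2 : ∀ w, f₂ w = k ↔ f₁ w = k)
    (x : {w : V // f₁ w = j} → ℤ) :
    x ∈ LinearMap.ker (dmap f₁ ν j k)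
      ↔ ext0 (fun w => f₁ w = j) (fun w => f₂ w = j) x ∈ LinearMap.ker (dmap f₂ ν j k) := by
  rw [mem_ker_iff, mem_ker_iff,
    toV_ext0 (P := fun w => f₁ w = j) (Q := fun w => f₂ w = j) (fun u => (h1 u).mpr) x]
  constructor
  · intro h w hw
    exact h w ((h2 w).mp hw)
  · intro h w hw
    exact h w ((h2 w).mpr hw)

lemma dmap_ext0_gen {j k : ℤ} (h1 : ∀ w, f₂ w = j ↔ f₁ w = j) (h2 : ∀ w, f₂ w = k ↔ f₁ w = k)
    (y : {w : V // f₁ w = j} → ℤ) :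
    dmap f₂ ν j k (ext0 (fun w => f₁ w = j) (fun w => f₂ w = j) y)
      = ext0 (fun w => f₁ w = k) (fun w => f₂ w = k) (dmap f₁ ν j k y) := by
  rw [dmap_eq_iff]
  intro w hw
  have hext : (ext0 (fun w => f₁ w = k) (fun w => f₂ w = k) (dmap f₁ ν j k y)) ⟨w, hw⟩
      = toV (fun w => f₁ w = k) (dmap f₁ ν j k y) w := rfl
  rw [hext, toV_ext0 (fun u => (h1 u).mpr) y, dmap_toV, if_pos ((h2 w).mp hw)]

lemma range_iff_gen {j k : ℤ} (h1 : ∀ w, f₂ w = j ↔ f₁ w = j) (h2 : ∀ w, f₂ w = k ↔ f₁ w = k)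
    (x : {w : V // f₁ w = k} → ℤ) :
    x ∈ LinearMap.range (dmap f₁ ν j k)
      ↔ ext0 (fun w => f₁ w = k) (fun w => f₂ w = k) x ∈ LinearMap.range (dmap f₂ ν j k) := by
  constructor
  · rintro ⟨y, rfl⟩
    exact ⟨ext0 _ _ y, dmap_ext0_gen h1 h2 y⟩
  · rintro ⟨y', hy⟩
    refine ⟨ext0 (fun w => f₂ w = j) (fun w => f₁ w = j) y', ?_⟩
    apply ext0_inj (P := fun w => f₁ w = k) (Q := fun w => f₂ w = k) (fun u => (h2 u).mpr)
    rw [← hy]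
    rw [← dmap_ext0_gen (ν := ν) h1 h2 (ext0 (fun w => f₂ w = j) (fun w => f₁ w = j) y'),
      ext0_ext0 (fun u => (h1 u)) y']

end Generic

end Elements
section Machinery

variable {V : Type*} [Fintype V] [DecidableEq V]

/-- The functional `x ↦ ∑ u, ν u v * x u` on a level. -/
def Bfun (ν : V → V → ℤ) (v : V) (P : V → Prop) [DecidablePred P] :
    ({w : V // P w} → ℤ) →ₗ[ℤ] ℤ where
  toFun x := ∑ u : V, ν u v * toV P x u
  map_add' x y := by
    simp only [map_add, Pi.add_apply, mul_add]
    rw [Finset.sum_add_distrib]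
  map_smul' c x := by
    simp only [map_smul, Pi.smul_apply, smul_eq_mul, RingHom.id_apply]
    rw [Finset.mul_sum]
    exact Finset.sum_congr rfl fun u _ => by ring

lemma Bfun_apply (ν : V → V → ℤ) (v : V) (P : V → Prop) [DecidablePred P] (x) :
    Bfun ν v P x = ∑ u : V, ν u v * toV P x u := rfl

noncomputable def quotEquivOfKer {R M N : Type*} [Ring R] [AddCommGroup M] [Module R M]
    [AddCommGroup N] [Module R N] (p : Submodule R M) (r : Submodule R N)
    (g : M →ₗ[R] N ⧸ r) (hker : LinearMap.ker g = p) (hsurj : Function.Surjective g) :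
    (M ⧸ p) ≃ₗ[R] N ⧸ r :=
  (Submodule.quotEquivOfEq p _ hker.symm).trans (g.quotKerEquivOfSurjective hsurj)

variable {f₁ f₂ : V → ℤ} {ν : V → V → ℤ} {v : V} {n : ℕ}

lemma sur_of_iff {j k : ℤ}
    (h1 : ∀ w, f₂ w = j ↔ f₁ w = j)
    (hker : ∀ x : {w : V // f₁ w = j} → ℤ,
      x ∈ LinearMap.ker (dmap f₁ ν j k)
        ↔ ext0 (fun w => f₁ w = j) (fun w => f₂ w = j) x ∈ LinearMap.ker (dmap f₂ ν j k)) :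
    ∀ z ∈ LinearMap.ker (dmap f₂ ν j k),
      ∃ x ∈ LinearMap.ker (dmap f₁ ν j k),
        ext0 (fun w => f₁ w = j) (fun w => f₂ w = j) x = z := fun z hz =>
  ⟨ext0 (fun w => f₂ w = j) (fun w => f₁ w = j) z,
    (hker _).2 (by rw [ext0_ext0 h1 z]; exact hz), ext0_ext0 h1 z⟩

lemma master (i : ℤ)
    (hker : ∀ x : {w : V // f₁ w = i} → ℤ,
      x ∈ LinearMap.ker (dmap f₁ ν i (i - 1))
        ↔ ext0 (fun w => f₁ w = i) (fun w => f₂ w = i) x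
            ∈ LinearMap.ker (dmap f₂ ν i (i - 1)))
    (hrange : ∀ x : {w : V // f₁ w = i} → ℤ,
      x ∈ LinearMap.range (dmap f₁ ν (i + 1) i)
        ↔ ext0 (fun w => f₁ w = i) (fun w => f₂ w = i) x
            ∈ LinearMap.range (dmap f₂ ν (i + 1) i))
    (hsur : ∀ z ∈ LinearMap.ker (dmap f₂ ν i (i - 1)),
      ∃ x ∈ LinearMap.ker (dmap f₁ ν i (i - 1)),
        ext0 (fun w => f₁ w = i) (fun w => f₂ w = i) x = z) :
    Nonempty (Hk f₁ ν i ≃+ Hk f₂ ν i) := by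
  set K₂ := LinearMap.ker (dmap f₂ ν i (i - 1)) with hK₂
  set I₂ := (LinearMap.range (dmap f₂ ν (i + 1) i)).comap K₂.subtype with hI₂
  have hre : ∀ x ∈ LinearMap.ker (dmap f₁ ν i (i - 1)),
      ext0 (fun w => f₁ w = i) (fun w => f₂ w = i) x ∈ K₂ := fun x hx => (hker x).1 hx
  set r := (ext0 (fun w => f₁ w = i) (fun w => f₂ w = i)).restrict hre with hr
  set g := I₂.mkQ.comp r with hg
  have hkerg : LinearMap.ker g
      = (LinearMap.range (dmap f₁ ν (i + 1) i)).comap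
          (LinearMap.ker (dmap f₁ ν i (i - 1))).subtype := by
    ext x
    rw [LinearMap.mem_ker, hg, LinearMap.comp_apply, Submodule.mkQ_apply,
      Submodule.Quotient.mk_eq_zero, hI₂, Submodule.mem_comap, Submodule.mem_comap,
      Submodule.subtype_apply, Submodule.subtype_apply]
    exact (hrange x.1).symm
  have hsurj : Function.Surjective g := by
    intro z
    obtain ⟨z', rfl⟩ := Submodule.mkQ_surjective I₂ z
    obtain ⟨x, hxK, hxe⟩ := hsur z'.1 z'.2
    refine ⟨⟨x, hxK⟩, ?_⟩
    show I₂.mkQ (r _) = I₂.mkQ z'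
    exact congrArg I₂.mkQ (Subtype.ext hxe)
  exact ⟨(quotEquivOfKer _ _ g hkerg hsurj).toAddEquiv⟩

end Machinery
section Part3

variable {V : Type*} [Fintype V] [DecidableEq V]
variable {f₁ f₂ : V → ℤ} {ν : V → V → ℤ} {v : V} {n : ℕ}

namespace Setup

variable (S : Setup f₁ f₂ ν v n)
include S

lemma ker_iff_q3 {j k : ℤ} (hj : j = f₁ v + 3) (hk : k = f₁ v + 2)
    (x : {w : V // f₁ w = j} → ℤ) :
    x ∈ LinearMap.ker (dmap f₁ ν j k)
      ↔ ext0 (fun w => f₁ w = j) (fun w => f₂ w = j) x ∈ LinearMap.ker (dmap f₂ ν j k) := by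
  rw [mem_ker_iff, mem_ker_iff,
    toV_ext0 (fun u hu => by rw [S.h2 u (by rintro rfl; omega)]; exact hu) x]
  constructor
  · intro h w hw
    by_cases hwv : w = v
    · subst hwv
      exact S.sum_nu_v_zero (fun u hu => by omega) x
    · exact h w (by rw [← S.h2 w hwv]; exact hw)
  · intro h w hw
    exact h w (by rw [S.h2 w (by rintro rfl; omega)]; exact hw)

lemma range_iff_qm1 {j k : ℤ} (hj : j = f₁ v) (hk : k = f₁ v - 1)
    (x : {w : V // f₁ w = k} → ℤ) :
    x ∈ LinearMap.range (dmap f₁ ν j k)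
      ↔ ext0 (fun w => f₁ w = k) (fun w => f₂ w = k) x
          ∈ LinearMap.range (dmap f₂ ν j k) := by
  constructor
  · rintro ⟨y, rfl⟩
    exact ⟨ext0 _ _ y, S.d1_restrict hj hk y⟩
  · rintro ⟨y', hy⟩
    refine ⟨ext0 (fun w => f₂ w = j) (fun w => f₁ w = j) y', ?_⟩
    rw [S.d1_ext0_down hj hk y', hy]
    exact ext0_ext0 (fun u => (S.lev_iff (by omega) (by omega) u).symm) x

lemma ker_iff_q2 {j k : ℤ} (hj : j = f₁ v + 2) (hk : k = f₁ v + 1)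
    (x : {w : V // f₁ w = j} → ℤ) :
    x ∈ LinearMap.ker (dmap f₁ ν j k)
      ↔ ext0 (fun w => f₁ w = j) (fun w => f₂ w = j) x ∈ LinearMap.ker (dmap f₂ ν j k) := by
  rw [LinearMap.mem_ker, LinearMap.mem_ker, S.d2_ext0_top hj hk x]
  constructor
  · intro h; rw [h, map_zero]
  · intro h
    apply ext0_inj
      (fun u (hu : f₁ u = k) => show f₂ u = k by rw [S.h2 u (by rintro rfl; omega)]; exact hu)
    rw [h, map_zero]

lemma range_iff_q2 {j k : ℤ} (hj : j = f₁ v + 3) (hk : k = f₁ v + 2)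
    (x : {w : V // f₁ w = k} → ℤ) :
    x ∈ LinearMap.range (dmap f₁ ν j k)
      ↔ ext0 (fun w => f₁ w = k) (fun w => f₂ w = k) x
          ∈ LinearMap.range (dmap f₂ ν j k) := by
  constructor
  · rintro ⟨y, rfl⟩
    exact ⟨ext0 _ _ y, S.d2_ext0_q3 hj hk y⟩
  · rintro ⟨y', hy⟩
    refine ⟨ext0 (fun w => f₂ w = j) (fun w => f₁ w = j) y', ?_⟩
    apply ext0_inj
      (fun u (hu : f₁ u = k) => show f₂ u = k by rw [S.h2 u (by rintro rfl; omega)]; exact hu)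
    rw [← S.d2_ext0_q3 hj hk _, ext0_ext0 (S.lev_iff (by omega) (by omega)) y', hy]

lemma bfun_alpha {k : ℤ} (hk : k = f₁ v + 1) :
    Bfun ν v (fun u => f₁ u = k) (alphaG f₁ ν v k) = (n : ℤ) := by
  rw [Bfun_apply]
  calc (∑ u : V, ν u v * toV (fun u => f₁ u = k) (alphaG f₁ ν v k) u)
      = ∑ u : V, ν v u * ν u v := by
        refine Finset.sum_congr rfl fun u _ => ?_
        rw [S.toV_alphaG hk u]; ring
    _ = (n : ℤ) := S.rankv

lemma sur_q2 {j k : ℤ} (hj : j = f₁ v + 2) (hk : k = f₁ v + 1) :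
    ∀ z ∈ LinearMap.ker (dmap f₂ ν j k),
      ∃ x ∈ LinearMap.ker (dmap f₁ ν j k),
        ext0 (fun w => f₁ w = j) (fun w => f₂ w = j) x = z := by
  intro z hz
  have h2v' : f₂ v = j := by rw [S.h2v]; omega
  have hdec := S.decompose_top hj h2v' z
  set m := toV (fun w => f₂ w = j) z v with hmdef
  set y := ext0 (fun w => f₂ w = j) (fun w => f₁ w = j) z with hydef
  have h0 : dmap f₂ ν j k z = 0 := hz
  have hcomb : ext0 (fun w => f₁ w = k) (fun w => f₂ w = k)
      (dmap f₁ ν j k y + m • alphaG f₁ ν v k) = 0 := by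
    rw [map_add, map_smul, ← S.d2_ext0_top hj hk y, ← S.d2_vhat2 hj hk h2v',
      ← map_smul, ← map_add, ← hdec]
    exact h0
  have hzero : dmap f₁ ν j k y + m • alphaG f₁ ν v k = 0 := by
    apply ext0_inj
      (fun u (hu : f₁ u = k) => show f₂ u = k by rw [S.h2 u (by rintro rfl; omega)]; exact hu)
    rw [hcomb, map_zero]
  have hb := congrArg (Bfun ν v (fun u => f₁ u = k)) hzero
  rw [map_add, map_smul, map_zero] at hb
  have hb1 : Bfun ν v (fun u => f₁ u = k) (dmap f₁ ν j k y) = 0 := S.dd_v hj hk y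
  rw [hb1, S.bfun_alpha hk, zero_add, smul_eq_mul] at hb
  have hm0 : m = 0 := by
    rcases mul_eq_zero.mp hb with h | h
    · exact h
    · exact absurd h (by exact_mod_cast S.npos.ne')
  rw [hm0, zero_smul, add_zero] at hdec hzero
  exact ⟨y, by rw [LinearMap.mem_ker]; exact hzero, hdec.symm⟩

lemma part3 (i : ℤ) (hi1 : i ≠ f₁ v) (hi2 : i ≠ f₁ v + 1) :
    Nonempty (Hk f₁ ν i ≃+ Hk f₂ ν i) := by
  by_cases hc2 : i = f₁ v + 2
  · exact master i (fun x => S.ker_iff_q2 hc2 (by omega) x)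
      (fun x => S.range_iff_q2 (by omega) hc2 x)
      (S.sur_q2 hc2 (by omega))
  · by_cases hc3 : i = f₁ v + 3
    · exact master i (fun x => S.ker_iff_q3 hc3 (by omega) x)
        (fun x => range_iff_gen (S.lev_iff (by omega) (by omega))
          (S.lev_iff (by omega) (by omega)) x)
        (sur_of_iff (S.lev_iff (by omega) (by omega))
          (fun x => S.ker_iff_q3 hc3 (by omega) x))
    · by_cases hcm : i = f₁ v - 1
      · exact master i
          (fun x => ker_iff_gen (S.lev_iff (by omega) (by omega))
            (S.lev_iff (by omega) (by omega)) x)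
          (fun x => S.range_iff_qm1 (by omega) (by omega) x)
          (sur_of_iff (S.lev_iff (by omega) (by omega))
            (fun x => ker_iff_gen (S.lev_iff (by omega) (by omega))
              (S.lev_iff (by omega) (by omega)) x))
      · exact master i
          (fun x => ker_iff_gen (S.lev_iff (by omega) (by omega))
            (S.lev_iff (by omega) (by omega)) x)
          (fun x => range_iff_gen (S.lev_iff (by omega) (by omega))
            (S.lev_iff (by omega) (by omega)) x)
          (sur_of_iff (S.lev_iff (by omega) (by omega))
            (fun x => ker_iff_gen (S.lev_iff (by omega) (by omega))
              (S.lev_iff (by omega) (by omega)) x))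

end Setup

end Part3
section PartsOneTwo

variable {V : Type*} [Fintype V] [DecidableEq V]

lemma ext0_self (P : V → Prop) [DecidablePred P] (y : {w : V // P w} → ℤ) :
    ext0 P P y = y := funext fun w => toV_pos (P := P) y w.2

lemma ker_congr (f : V → ℤ) (ν : V → V → ℤ) (j : ℤ) {k k' : ℤ} (h : k = k') :
    LinearMap.ker (dmap f ν j k) = LinearMap.ker (dmap f ν j k') := by subst h; rfl

lemma range_congr (f : V → ℤ) (ν : V → V → ℤ) {j j' : ℤ} (k : ℤ) (h : j = j') :
    LinearMap.range (dmap f ν j k) = LinearMap.range (dmap f ν j' k) := by subst h; rfl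

/-- The ideal of multiples `t` such that `t • v̂` is a boundary. -/
noncomputable def Jmod (f₁ : V → ℤ) (ν : V → V → ℤ) (v : V) : Submodule ℤ ℤ :=
  (LinearMap.range (dmap f₁ ν (f₁ v + 1) (f₁ v))).comap
    (LinearMap.toSpanSingleton ℤ _ (vhatG f₁ v rfl))

/-- The positive generator of `Jmod`. -/
noncomputable def kval (f₁ : V → ℤ) (ν : V → V → ℤ) (v : V) : ℕ :=
  (Submodule.IsPrincipal.generator (Jmod f₁ ν v)).natAbs

lemma mem_Jmod {f₁ : V → ℤ} {ν : V → V → ℤ} {v : V} (t : ℤ) :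
    t ∈ Jmod f₁ ν v
      ↔ t • vhatG f₁ v rfl ∈ LinearMap.range (dmap f₁ ν (f₁ v + 1) (f₁ v)) := by
  rw [Jmod, Submodule.mem_comap, LinearMap.toSpanSingleton_apply]

lemma Jmod_eq_span (f₁ : V → ℤ) (ν : V → V → ℤ) (v : V) :
    Jmod f₁ ν v = Submodule.span ℤ {(kval f₁ ν v : ℤ)} := by
  conv_lhs => rw [← Submodule.IsPrincipal.span_singleton_generator (Jmod f₁ ν v)]
  exact (Int.span_natAbs _).symm

lemma mem_span_int {a b : ℤ} : a ∈ Submodule.span ℤ {b} ↔ b ∣ a :=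
  Ideal.mem_span_singleton

lemma mem_Jmod_iff {f₁ : V → ℤ} {ν : V → V → ℤ} {v : V} (t : ℤ) :
    t ∈ Jmod f₁ ν v ↔ (kval f₁ ν v : ℤ) ∣ t := by
  rw [Jmod_eq_span]
  exact Ideal.mem_span_singleton

variable {f₁ f₂ : V → ℤ} {ν : V → V → ℤ} {v : V} {n : ℕ}

namespace Setup

variable (S : Setup f₁ f₂ ν v n)
include S

lemma n_mem_Jmod : (n : ℤ) ∈ Jmod f₁ ν v :=
  (mem_Jmod _).mpr ⟨alphaG f₁ ν v (f₁ v + 1), S.d_alphaG rfl rfl⟩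

lemma kval_dvd : kval f₁ ν v ∣ n :=
  Int.natCast_dvd_natCast.mp ((mem_Jmod_iff _).mp S.n_mem_Jmod)

lemma kval_pos : 0 < kval f₁ ν v := by
  rcases Nat.eq_zero_or_pos (kval f₁ ν v) with h | h
  · exfalso
    have := (mem_Jmod_iff (n : ℤ)).mp S.n_mem_Jmod
    rw [h] at this
    have : (n : ℤ) = 0 := zero_dvd_iff.mp (by exact_mod_cast this)
    have := S.npos
    omega
  · exact h

lemma lev_iff_q1 : ∀ u, f₂ u = f₁ v + 1 ↔ f₁ u = f₁ v + 1 :=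
  S.lev_iff (by omega) (by omega)

lemma toV_at_v_q (z : {w : V // f₂ w = f₁ v} → ℤ) :
    toV (fun w => f₂ w = f₁ v) z v = 0 :=
  toV_neg (P := fun w => f₂ w = f₁ v) z
    (fun hh => by have hh' : f₂ v = f₁ v := hh; rw [S.h2v] at hh'; omega)

lemma betaG_ext0 (y : {w : V // f₁ w = f₁ v + 1} → ℤ) :
    betaG f₁ f₂ ν v (f₁ v + 1) rfl
        (ext0 (fun w => f₁ w = f₁ v + 1) (fun w => f₂ w = f₁ v + 1) y)
      = Bfun ν v (fun u => f₁ u = f₁ v + 1) y := by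
  rw [S.betaG_apply rfl rfl, Bfun_apply,
    toV_ext0 (fun u hu => (S.lev_iff_q1 u).mpr hu) y]

/-- From the key identity: the `v`-component comparison. -/
lemma key_v_component (x : {w : V // f₂ w = f₁ v + 1} → ℤ) {t : ℤ}
    (h : dmap f₁ ν (f₁ v + 1) (f₁ v)
        (ext0 (fun w => f₂ w = f₁ v + 1) (fun w => f₁ w = f₁ v + 1) x)
      = t • vhatG f₁ v rfl) :
    betaG f₁ f₂ ν v (f₁ v + 1) rfl x = t
      ∧ dmap f₂ ν (f₁ v + 1) (f₁ v) x = 0 := by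
  have hkey := S.key rfl rfl x
  rw [h] at hkey
  have hcv := congrFun (congrArg (toV (fun w => f₁ w = f₁ v)) hkey) v
  simp only [map_add, map_smul, Pi.add_apply, Pi.smul_apply, smul_eq_mul] at hcv
  rw [toV_vhatG rfl v, if_pos rfl, mul_one, mul_one,
    toV_ext0' (fun w => f₂ w = f₁ v) (fun w => f₁ w = f₁ v) _ v, if_pos rfl,
    S.toV_at_v_q, add_zero] at hcv
  refine ⟨hcv.symm, ?_⟩
  rw [← hcv] at hkey
  have hz : ext0 (fun w => f₂ w = f₁ v) (fun w => f₁ w = f₁ v)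
      (dmap f₂ ν (f₁ v + 1) (f₁ v) x) = 0 := by
    have := hkey.symm
    rwa [add_eq_left] at this
  exact ext0_inj (P := fun w => f₂ w = f₁ v) (Q := fun w => f₁ w = f₁ v)
    (fun u hu => ((S.levq u).mp hu).1) (hz.trans (map_zero _).symm)

lemma range_betaD :
    LinearMap.range ((betaG f₁ f₂ ν v (f₁ v + 1) rfl).comp
        (LinearMap.ker (dmap f₂ ν (f₁ v + 1) (f₁ v + 1 - 1))).subtype)
      = Jmod f₁ ν v := by
  ext t
  rw [LinearMap.mem_range]
  constructor
  · rintro ⟨⟨x, hx⟩, rfl⟩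
    rw [ker_congr f₂ ν (f₁ v + 1) (show (f₁ v + 1 - 1 : ℤ) = f₁ v by omega),
      LinearMap.mem_ker] at hx
    have hkey := S.key rfl rfl x
    rw [hx, map_zero, add_zero] at hkey
    exact (mem_Jmod _).mpr ⟨_, hkey⟩
  · intro htJ
    obtain ⟨y, hy⟩ := (mem_Jmod t).mp htJ
    set x := ext0 (fun w => f₁ w = f₁ v + 1) (fun w => f₂ w = f₁ v + 1) y with hxdef
    have hback : ext0 (fun w => f₂ w = f₁ v + 1) (fun w => f₁ w = f₁ v + 1) x = y :=
      ext0_ext0 (fun u => (S.lev_iff_q1 u).symm) y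
    obtain ⟨hbt, hker⟩ := S.key_v_component x (by rw [hback, hy])
    refine ⟨⟨x, ?_⟩, hbt⟩
    rw [ker_congr f₂ ν (f₁ v + 1) (show (f₁ v + 1 - 1 : ℤ) = f₁ v by omega),
      LinearMap.mem_ker]
    exact hker

end Setup

end PartsOneTwo
section PartOne

variable {V : Type*} [Fintype V] [DecidableEq V]
variable {f₁ f₂ : V → ℤ} {ν : V → V → ℤ} {v : V} {n : ℕ}

namespace Setup

variable (S : Setup f₁ f₂ ν v n)
include S

lemma part1 :
    ∃ C : Submodule ℤ (Hk f₁ ν (f₁ v)), IsAddCyclic C ∧ Nat.card C = kval f₁ ν v ∧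
      Nonempty ((Hk f₂ ν (f₁ v)) ≃+ (Hk f₁ ν (f₁ v) ⧸ C)) := by
  classical
  have hvhK : vhatG f₁ v rfl ∈ LinearMap.ker (dmap f₁ ν (f₁ v) (f₁ v - 1)) := by
    rw [LinearMap.mem_ker]; exact S.d_vhat_zero rfl rfl
  set KA := LinearMap.ker (dmap f₁ ν (f₁ v) (f₁ v - 1)) with hKA
  set IA := (LinearMap.range (dmap f₁ ν (f₁ v + 1) (f₁ v))).comap KA.subtype with hIA
  set vhK : KA := ⟨vhatG f₁ v rfl, hvhK⟩ with hvhKdef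
  set tq : KA ⧸ IA := IA.mkQ vhK with htq
  have hord : ∀ m : ℤ, m • tq = 0 ↔ (kval f₁ ν v : ℤ) ∣ m := by
    intro m
    rw [htq, ← map_smul, Submodule.mkQ_apply, Submodule.Quotient.mk_eq_zero, hIA,
      Submodule.mem_comap, Submodule.subtype_apply]
    have hcoe : ((m • vhK : KA) : {w : V // f₁ w = f₁ v} → ℤ) = m • vhatG f₁ v rfl := rfl
    rw [hcoe, ← mem_Jmod, mem_Jmod_iff]
  have haddord : addOrderOf tq = kval f₁ ν v := by
    have h1 : addOrderOf tq ∣ kval f₁ ν v := addOrderOf_dvd_iff_nsmul_eq_zero.mpr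
      (by rw [← Nat.cast_smul_eq_nsmul ℤ]; exact (hord _).mpr dvd_rfl)
    have h2 : (kval f₁ ν v : ℤ) ∣ (addOrderOf tq : ℤ) := (hord _).mp
      (by rw [Nat.cast_smul_eq_nsmul ℤ]; exact addOrderOf_nsmul_eq_zero tq)
    exact Nat.dvd_antisymm h1 (Int.natCast_dvd_natCast.mp h2)
  set C := Submodule.span ℤ {tq} with hC
  have hcyc : IsAddCyclic C := by
    have hmem : ∀ c : ℤ, (LinearMap.toSpanSingleton ℤ _ tq) c ∈ C := fun c => by
      rw [LinearMap.toSpanSingleton_apply]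
      exact Submodule.smul_mem _ c (Submodule.mem_span_singleton_self tq)
    have hsurj : Function.Surjective
        ((LinearMap.toSpanSingleton ℤ _ tq).codRestrict C hmem) := by
      rintro ⟨x, hx⟩
      obtain ⟨a, ha⟩ := Submodule.mem_span_singleton.mp hx
      exact ⟨a, Subtype.ext (by rw [LinearMap.codRestrict_apply,
        LinearMap.toSpanSingleton_apply]; exact ha)⟩
    exact isAddCyclic_of_surjective _ hsurj
  have hcard : Nat.card C = kval f₁ ν v := by
    have hset : (C : Set (KA ⧸ IA)) = (AddSubgroup.zmultiples tq : Set _) := by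
      ext x
      simp [hC, Submodule.mem_span_singleton, AddSubgroup.mem_zmultiples_iff]
    calc Nat.card C = Nat.card (AddSubgroup.zmultiples tq) :=
          Nat.card_congr (Equiv.setCongr hset)
      _ = addOrderOf tq := Nat.card_zmultiples tq
      _ = kval f₁ ν v := haddord
  set T : Submodule ℤ KA := IA ⊔ Submodule.span ℤ {vhK} with hT
  have hmapT : Submodule.map IA.mkQ T = C := by
    rw [hT, Submodule.map_sup, Submodule.map_span, Set.image_singleton]
    have hbot : Submodule.map IA.mkQ IA = ⊥ := by
      ext z
      simp only [Submodule.mem_map, Submodule.mem_bot]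
      constructor
      · rintro ⟨a, ha, rfl⟩
        rw [Submodule.mkQ_apply, Submodule.Quotient.mk_eq_zero]
        exact ha
      · rintro rfl
        exact ⟨0, Submodule.zero_mem _, map_zero _⟩
    rw [hbot, bot_sup_eq]
  -- the map from the f₂-kernel
  have hreB : ∀ x ∈ LinearMap.ker (dmap f₂ ν (f₁ v) (f₁ v - 1)),
      ext0 (fun w => f₂ w = f₁ v) (fun w => f₁ w = f₁ v) x ∈ KA := by
    intro x hx
    rw [hKA, LinearMap.mem_ker, S.d1_ext0_down rfl rfl x, LinearMap.mem_ker.mp hx, map_zero]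
  set rB := (ext0 (fun w => f₂ w = f₁ v) (fun w => f₁ w = f₁ v)).restrict hreB with hrB
  set gq := T.mkQ.comp rB with hgq
  have hkergq : LinearMap.ker gq
      = (LinearMap.range (dmap f₂ ν (f₁ v + 1) (f₁ v))).comap
          (LinearMap.ker (dmap f₂ ν (f₁ v) (f₁ v - 1))).subtype := by
    ext x
    rw [LinearMap.mem_ker, hgq, LinearMap.comp_apply, Submodule.mkQ_apply,
      Submodule.Quotient.mk_eq_zero, Submodule.mem_comap, Submodule.subtype_apply]
    constructor
    · intro hmem
      rw [hT, Submodule.mem_sup] at hmem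
      obtain ⟨a, haIA, b, hb, hab⟩ := hmem
      obtain ⟨c, hc⟩ := Submodule.mem_span_singleton.mp hb
      rw [hIA, Submodule.mem_comap, Submodule.subtype_apply] at haIA
      obtain ⟨ya, hya⟩ := haIA
      have habc : (a : {w : V // f₁ w = f₁ v} → ℤ) + c • vhatG f₁ v rfl
          = ext0 (fun w => f₂ w = f₁ v) (fun w => f₁ w = f₁ v) x.1 := by
        have h1 := congrArg (Subtype.val) hab
        rw [← hc] at h1
        exact h1
      set xb := ext0 (fun w => f₁ w = f₁ v + 1) (fun w => f₂ w = f₁ v + 1) ya with hxb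
      have hback : ext0 (fun w => f₂ w = f₁ v + 1) (fun w => f₁ w = f₁ v + 1) xb = ya :=
        ext0_ext0 (fun u => (S.lev_iff_q1 u).symm) ya
      have hkey := S.key rfl rfl xb
      rw [hback, hya] at hkey
      -- value of a at v is betaG xb ; value of ext0 x.1 at v is 0
      have hval := congrFun (congrArg (toV (fun w => f₁ w = f₁ v)) habc) v
      rw [map_add, map_smul] at hval
      have hav := congrFun (congrArg (toV (fun w => f₁ w = f₁ v)) hkey) v
      rw [map_add, map_smul] at hav
      simp only [Pi.add_apply, Pi.smul_apply, smul_eq_mul] at hval hav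
      rw [toV_vhatG rfl v, if_pos rfl, mul_one,
        toV_ext0' (fun w => f₂ w = f₁ v) (fun w => f₁ w = f₁ v) _ v, if_pos rfl,
        S.toV_at_v_q] at hval
      rw [toV_vhatG rfl v, if_pos rfl, mul_one,
        toV_ext0' (fun w => f₂ w = f₁ v) (fun w => f₁ w = f₁ v) _ v, if_pos rfl,
        S.toV_at_v_q, add_zero] at hav
      -- hval : toV a v + c = 0 ; hav : toV a v = betaG xb
      -- combine: ext0 x.1 = a + c • vh = betaG xb • vh + ext0 (d2 xb) + c • vh
      --          = ext0 (d2 xb)  (since c = -betaG xb)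
      have hc0 : c = - betaG f₁ f₂ ν v (f₁ v + 1) rfl xb := by omega
      have hfin : ext0 (fun w => f₂ w = f₁ v) (fun w => f₁ w = f₁ v) x.1
          = ext0 (fun w => f₂ w = f₁ v) (fun w => f₁ w = f₁ v)
              (dmap f₂ ν (f₁ v + 1) (f₁ v) xb) := by
        rw [← habc, hkey, hc0]
        module
      have := ext0_inj (P := fun w => f₂ w = f₁ v) (Q := fun w => f₁ w = f₁ v)
        (fun u hu => ((S.levq u).mp hu).1) hfin
      exact ⟨xb, this.symm⟩
    · rintro ⟨x', hx'⟩
      have hkey := S.key rfl rfl x'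
      rw [hx'] at hkey
      rw [hT, Submodule.mem_sup]
      have haKA : rB x + betaG f₁ f₂ ν v (f₁ v + 1) rfl x' • vhK ∈ IA := by
        rw [hIA, Submodule.mem_comap, Submodule.subtype_apply]
        refine ⟨ext0 (fun w => f₂ w = f₁ v + 1) (fun w => f₁ w = f₁ v + 1) x', ?_⟩
        rw [hkey]
        show _ = (ext0 (fun w => f₂ w = f₁ v) (fun w => f₁ w = f₁ v) x.1)
          + betaG f₁ f₂ ν v (f₁ v + 1) rfl x' • vhatG f₁ v rfl
        abel
      exact ⟨rB x + betaG f₁ f₂ ν v (f₁ v + 1) rfl x' • vhK, haKA,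
        -(betaG f₁ f₂ ν v (f₁ v + 1) rfl x' • vhK),
        Submodule.neg_mem _ (Submodule.smul_mem _ _ (Submodule.mem_span_singleton_self vhK)),
        by abel⟩
  have hsurgq : Function.Surjective gq := by
    intro z
    obtain ⟨z', rfl⟩ := Submodule.mkQ_surjective T z
    have hdec := S.decompose_q rfl z'.1
    have hz'B : ext0 (fun w => f₁ w = f₁ v) (fun w => f₂ w = f₁ v) z'.1
        ∈ LinearMap.ker (dmap f₂ ν (f₁ v) (f₁ v - 1)) := by
      rw [LinearMap.mem_ker, S.d1_restrict rfl rfl z'.1, LinearMap.mem_ker.mp z'.2, map_zero]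
    refine ⟨⟨_, hz'B⟩, ?_⟩
    show T.mkQ (rB _) = T.mkQ z'
    rw [Submodule.mkQ_apply, Submodule.mkQ_apply, Submodule.Quotient.eq]
    have hE : ext0 (fun w => f₂ w = f₁ v) (fun w => f₁ w = f₁ v)
        (ext0 (fun w => f₁ w = f₁ v) (fun w => f₂ w = f₁ v) z'.1)
        = z'.1 - toV (fun w => f₁ w = f₁ v) z'.1 v • vhatG f₁ v rfl :=
      eq_sub_of_add_eq hdec.symm
    have hval : (rB ⟨_, hz'B⟩ - z' : KA)
        = -((toV (fun w => f₁ w = f₁ v) z'.1 v) • vhK) := by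
      apply Subtype.ext
      show ext0 (fun w => f₂ w = f₁ v) (fun w => f₁ w = f₁ v)
          (ext0 (fun w => f₁ w = f₁ v) (fun w => f₂ w = f₁ v) z'.1) - z'.1
        = -(toV (fun w => f₁ w = f₁ v) z'.1 v • vhatG f₁ v rfl)
      rw [hE]
      abel
    rw [hval]
    exact Submodule.neg_mem _ (Submodule.smul_mem _ _
      (Submodule.mem_sup_right (Submodule.mem_span_singleton_self vhK)))
  refine ⟨C, hcyc, hcard, ⟨((quotEquivOfKer _ T gq hkergq hsurgq).trans
    ((Submodule.quotientQuotientEquivQuotient IA T le_sup_left).symm.trans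
      (Submodule.quotEquivOfEq _ _ hmapT))).toAddEquiv⟩⟩

end Setup

end PartOne
section PartTwo

variable {V : Type*} [Fintype V] [DecidableEq V]
variable {f₁ f₂ : V → ℤ} {ν : V → V → ℤ} {v : V} {n : ℕ}

namespace Setup

variable (S : Setup f₁ f₂ ν v n)
include S

/-- Decomposition of a boundary from the top level. -/
lemma image_decomp (y' : {w : V // f₂ w = f₁ v + 1 + 1} → ℤ) :
    dmap f₂ ν (f₁ v + 1 + 1) (f₁ v + 1) y'
      = ext0 (fun w => f₁ w = f₁ v + 1) (fun w => f₂ w = f₁ v + 1)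
          (dmap f₁ ν (f₁ v + 1 + 1) (f₁ v + 1)
            (ext0 (fun w => f₂ w = f₁ v + 1 + 1) (fun w => f₁ w = f₁ v + 1 + 1) y')
          + toV (fun w => f₂ w = f₁ v + 1 + 1) y' v • alphaG f₁ ν v (f₁ v + 1)) := by
  have h2v2 : f₂ v = f₁ v + 1 + 1 := by rw [S.h2v]; omega
  conv_lhs => rw [S.decompose_top (by omega) h2v2 y']
  rw [map_add, map_smul, S.d2_ext0_top (by omega) rfl, S.d2_vhat2 (by omega) rfl h2v2,
    ← map_smul, ← map_add]

lemma betaG_image (y' : {w : V // f₂ w = f₁ v + 1 + 1} → ℤ) :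
    betaG f₁ f₂ ν v (f₁ v + 1) rfl (dmap f₂ ν (f₁ v + 1 + 1) (f₁ v + 1) y')
      = toV (fun w => f₂ w = f₁ v + 1 + 1) y' v * n := by
  rw [S.image_decomp y', S.betaG_ext0, map_add, map_smul]
  have h1 : Bfun ν v (fun u => f₁ u = f₁ v + 1)
      (dmap f₁ ν (f₁ v + 1 + 1) (f₁ v + 1)
        (ext0 (fun w => f₂ w = f₁ v + 1 + 1) (fun w => f₁ w = f₁ v + 1 + 1) y')) = 0 :=
    S.dd_v (by omega) rfl _
  rw [h1, S.bfun_alpha rfl, zero_add, smul_eq_mul]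

set_option maxHeartbeats 1000000 in
set_option synthInstance.maxHeartbeats 400000 in
lemma part2 :
    ∃ φ : Hk f₁ ν (f₁ v + 1) →ₗ[ℤ] Hk f₂ ν (f₁ v + 1),
      Function.Injective φ ∧
        IsAddCyclic (Hk f₂ ν (f₁ v + 1) ⧸ LinearMap.range φ) ∧
        Nat.card (Hk f₂ ν (f₁ v + 1) ⧸ LinearMap.range φ) = n / kval f₁ ν v := by
  classical
  set k := kval f₁ ν v with hkdef
  have hk0 : (k : ℤ) ≠ 0 := Int.natCast_ne_zero.mpr S.kval_pos.ne'
  have hKC : ∀ x : {w : V // f₁ w = f₁ v + 1} → ℤ,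
      x ∈ LinearMap.ker (dmap f₁ ν (f₁ v + 1) (f₁ v + 1 - 1))
        ↔ dmap f₁ ν (f₁ v + 1) (f₁ v) x = 0 := by
    intro x
    rw [ker_congr f₁ ν (f₁ v + 1) (show (f₁ v + 1 - 1 : ℤ) = f₁ v by omega),
      LinearMap.mem_ker]
  have hKD : ∀ x : {w : V // f₂ w = f₁ v + 1} → ℤ,
      x ∈ LinearMap.ker (dmap f₂ ν (f₁ v + 1) (f₁ v + 1 - 1))
        ↔ dmap f₂ ν (f₁ v + 1) (f₁ v) x = 0 := by
    intro x
    rw [ker_congr f₂ ν (f₁ v + 1) (show (f₁ v + 1 - 1 : ℤ) = f₁ v by omega),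
      LinearMap.mem_ker]
  set KC := LinearMap.ker (dmap f₁ ν (f₁ v + 1) (f₁ v + 1 - 1)) with hKCd
  set IC := (LinearMap.range (dmap f₁ ν (f₁ v + 1 + 1) (f₁ v + 1))).comap KC.subtype with hICd
  set KD := LinearMap.ker (dmap f₂ ν (f₁ v + 1) (f₁ v + 1 - 1)) with hKDd
  set ID := (LinearMap.range (dmap f₂ ν (f₁ v + 1 + 1) (f₁ v + 1))).comap KD.subtype with hIDd
  -- the transport map on kernels
  have hmove : ∀ x : {w : V // f₁ w = f₁ v + 1} → ℤ,
      dmap f₁ ν (f₁ v + 1) (f₁ v) x = 0 →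
      betaG f₁ f₂ ν v (f₁ v + 1) rfl
          (ext0 (fun w => f₁ w = f₁ v + 1) (fun w => f₂ w = f₁ v + 1) x) = 0
        ∧ dmap f₂ ν (f₁ v + 1) (f₁ v)
            (ext0 (fun w => f₁ w = f₁ v + 1) (fun w => f₂ w = f₁ v + 1) x) = 0 := by
    intro x hx
    have hback : ext0 (fun w => f₂ w = f₁ v + 1) (fun w => f₁ w = f₁ v + 1)
        (ext0 (fun w => f₁ w = f₁ v + 1) (fun w => f₂ w = f₁ v + 1) x) = x :=
      ext0_ext0 (fun u => (S.lev_iff_q1 u).symm) x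
    exact S.key_v_component _ (by rw [hback, hx, zero_smul])
  have hre : ∀ x ∈ KC, ext0 (fun w => f₁ w = f₁ v + 1) (fun w => f₂ w = f₁ v + 1) x ∈ KD := by
    intro x hx
    rw [hKD]
    exact (hmove x ((hKC x).mp hx)).2
  set rCD := (ext0 (fun w => f₁ w = f₁ v + 1) (fun w => f₂ w = f₁ v + 1)).restrict hre
    with hrCD
  set gCD := ID.mkQ.comp rCD with hgCD
  -- the beta functional on KD
  set βD := (betaG f₁ f₂ ν v (f₁ v + 1) rfl).comp KD.subtype with hβD
  have hβrange : LinearMap.range βD = Submodule.span ℤ {(k : ℤ)} := by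
    rw [hβD, hKDd, S.range_betaD, Jmod_eq_span, hkdef]
  -- kernel of gCD
  have hkergCD : LinearMap.ker gCD = IC := by
    ext x
    rw [LinearMap.mem_ker, hgCD, LinearMap.comp_apply, Submodule.mkQ_apply,
      Submodule.Quotient.mk_eq_zero, hIDd, Submodule.mem_comap, Submodule.subtype_apply,
      hICd, Submodule.mem_comap, Submodule.subtype_apply]
    constructor
    · rintro ⟨y', hy'⟩
      have hdecomp := S.image_decomp y'
      rw [hdecomp] at hy'
      have heq := ext0_inj (P := fun w => f₁ w = f₁ v + 1) (Q := fun w => f₂ w = f₁ v + 1)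
        (fun u hu => (S.lev_iff_q1 u).mpr hu) hy'
      -- apply the Bfun functional
      have hb := congrArg (Bfun ν v (fun u => f₁ u = f₁ v + 1)) heq
      simp only [Submodule.subtype_apply] at heq hb
      rw [map_add, map_smul] at hb
      have hdd : Bfun ν v (fun u => f₁ u = f₁ v + 1)
          (dmap f₁ ν (f₁ v + 1 + 1) (f₁ v + 1)
            (ext0 (fun w => f₂ w = f₁ v + 1 + 1) (fun w => f₁ w = f₁ v + 1 + 1) y')) = 0 :=
        S.dd_v (by omega) rfl _
      have hBx : Bfun ν v (fun u => f₁ u = f₁ v + 1) x.1 = 0 := by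
        rw [← S.betaG_ext0]
        exact (hmove x.1 ((hKC x.1).mp x.2)).1
      rw [hdd, S.bfun_alpha rfl, hBx, zero_add, smul_eq_mul] at hb
      have hm0 : toV (fun w => f₂ w = f₁ v + 1 + 1) y' v = 0 := by
        rcases mul_eq_zero.mp hb with h | h
        · exact h
        · exact absurd h (by exact_mod_cast S.npos.ne')
      rw [hm0, zero_smul, add_zero] at heq
      exact ⟨_, heq⟩
    · rintro ⟨y, hy⟩
      refine ⟨ext0 (fun w => f₁ w = f₁ v + 1 + 1) (fun w => f₂ w = f₁ v + 1 + 1) y, ?_⟩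
      rw [S.d2_ext0_top (by omega) rfl y, hy]
      rfl
  -- φ
  have hle : IC ≤ LinearMap.ker gCD := le_of_eq hkergCD.symm
  set φ := IC.liftQ gCD hle with hφ
  have hinj : Function.Injective φ := by
    rw [← LinearMap.ker_eq_bot, hφ]
    exact Submodule.ker_liftQ_eq_bot IC gCD hle (le_of_eq hkergCD)
  have hrangeφ : LinearMap.range φ = LinearMap.range gCD := Submodule.range_liftQ _ _ _
  -- the subgroup SD
  set SD := LinearMap.range rCD ⊔ ID with hSD
  have hmapSD : Submodule.map ID.mkQ SD = LinearMap.range φ := by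
    rw [hrangeφ, hgCD, LinearMap.range_comp, hSD, Submodule.map_sup]
    have hbot : Submodule.map ID.mkQ ID = ⊥ := by
      ext z
      simp only [Submodule.mem_map, Submodule.mem_bot]
      constructor
      · rintro ⟨a, ha, rfl⟩
        rw [Submodule.mkQ_apply, Submodule.Quotient.mk_eq_zero]
        exact ha
      · rintro rfl
        exact ⟨0, Submodule.zero_mem _, map_zero _⟩
    rw [hbot, sup_bot_eq]
  -- division by k
  have hcodmem : ∀ x : KD, βD x ∈ Submodule.span ℤ {(k : ℤ)} := fun x => by
    rw [← hβrange]; exact ⟨x, rfl⟩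
  set βcod := βD.codRestrict (Submodule.span ℤ {(k : ℤ)}) hcodmem with hβcod
  set Bdiv := ((LinearEquiv.toSpanNonzeroSingleton ℤ ℤ (k : ℤ) hk0).symm.toLinearMap).comp βcod
    with hBdiv
  have hBdiv_spec : ∀ x : KD, Bdiv x * k = βD x := by
    intro x
    have h1 := (LinearEquiv.toSpanNonzeroSingleton ℤ ℤ (k : ℤ) hk0).apply_symm_apply (βcod x)
    have h2 := congrArg Subtype.val h1
    rw [LinearEquiv.toSpanNonzeroSingleton_apply] at h2
    rw [← smul_eq_mul]
    exact h2
  have hnk : (k : ℤ) * ((n / k : ℕ) : ℤ) = (n : ℤ) := by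
    rw [← Nat.cast_mul, Nat.mul_div_cancel' S.kval_dvd]
  -- element of norm n inside ID
  have h2v2 : f₂ v = f₁ v + 1 + 1 := by rw [S.h2v]; omega
  have halpha2 : betaG f₁ f₂ ν v (f₁ v + 1) rfl
        (dmap f₂ ν (f₁ v + 1 + 1) (f₁ v + 1) (Pi.single ⟨v, h2v2⟩ 1)) = (n : ℤ)
      ∧ dmap f₂ ν (f₁ v + 1) (f₁ v)
          (dmap f₂ ν (f₁ v + 1 + 1) (f₁ v + 1) (Pi.single ⟨v, h2v2⟩ 1)) = 0 := by
    rw [S.d2_vhat2 (by omega) rfl h2v2]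
    have hback : ext0 (fun w => f₂ w = f₁ v + 1) (fun w => f₁ w = f₁ v + 1)
        (ext0 (fun w => f₁ w = f₁ v + 1) (fun w => f₂ w = f₁ v + 1)
          (alphaG f₁ ν v (f₁ v + 1))) = alphaG f₁ ν v (f₁ v + 1) :=
      ext0_ext0 (fun u => (S.lev_iff_q1 u).symm) _
    exact S.key_v_component _ (by rw [hback, S.d_alphaG rfl rfl])
  set xa : KD := ⟨dmap f₂ ν (f₁ v + 1 + 1) (f₁ v + 1) (Pi.single ⟨v, h2v2⟩ 1),
    (hKD _).mpr halpha2.2⟩ with hxa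
  have hxaID : xa ∈ ID := by
    rw [hIDd, Submodule.mem_comap, Submodule.subtype_apply]
    exact ⟨_, rfl⟩
  have hβxa : βD xa = (n : ℤ) := halpha2.1
  -- kernel of βD is the range of rCD
  have hkerβ : ∀ x : KD, βD x = 0 → x ∈ LinearMap.range rCD := by
    intro x hx
    have hx0 : dmap f₂ ν (f₁ v + 1) (f₁ v) x.1 = 0 := (hKD x.1).mp x.2
    have hkey := S.key rfl rfl x.1
    rw [hx0, map_zero, add_zero] at hkey
    have hbx : betaG f₁ f₂ ν v (f₁ v + 1) rfl x.1 = 0 := hx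
    rw [hbx, zero_smul] at hkey
    have hzKC : ext0 (fun w => f₂ w = f₁ v + 1) (fun w => f₁ w = f₁ v + 1) x.1 ∈ KC :=
      (hKC _).mpr hkey
    refine ⟨⟨_, hzKC⟩, ?_⟩
    apply Subtype.ext
    show ext0 (fun w => f₁ w = f₁ v + 1) (fun w => f₂ w = f₁ v + 1)
      (ext0 (fun w => f₂ w = f₁ v + 1) (fun w => f₁ w = f₁ v + 1) x.1) = x.1
    exact ext0_ext0 S.lev_iff_q1 x.1
  -- βD image of SD members
  have hSD_iff : ∀ x : KD, x ∈ SD ↔ (n : ℤ) ∣ βD x := by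
    intro x
    constructor
    · intro hx
      rw [hSD, Submodule.mem_sup] at hx
      obtain ⟨a, ha, b, hb, hab⟩ := hx
      obtain ⟨z, rfl⟩ := ha
      rw [hIDd, Submodule.mem_comap, Submodule.subtype_apply] at hb
      obtain ⟨y', hy'⟩ := hb
      have hβa : βD (rCD z) = 0 := by
        show betaG f₁ f₂ ν v (f₁ v + 1) rfl
          (ext0 (fun w => f₁ w = f₁ v + 1) (fun w => f₂ w = f₁ v + 1) z.1) = 0
        exact (hmove z.1 ((hKC z.1).mp z.2)).1
      have hβb : βD b = toV (fun w => f₂ w = f₁ v + 1 + 1) y' v * n := by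
        show betaG f₁ f₂ ν v (f₁ v + 1) rfl b.1 = _
        rw [← hy']
        exact S.betaG_image y'
      rw [← hab, map_add, hβa, hβb, zero_add]
      exact Dvd.intro_left _ rfl
    · intro hdvd
      obtain ⟨t, ht⟩ := hdvd
      have hβsub : βD (x - t • xa) = 0 := by
        rw [map_sub, map_smul, hβxa, ht, smul_eq_mul]
        ring
      have hmem := hkerβ _ hβsub
      rw [hSD, Submodule.mem_sup]
      exact ⟨x - t • xa, hmem, t • xa, Submodule.smul_mem _ _ hxaID, by abel⟩
  -- the quotient map γ
  set γ := (Submodule.span ℤ {((n / k : ℕ) : ℤ)}).mkQ.comp Bdiv with hγ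
  have hkerγ : LinearMap.ker γ = SD := by
    ext x
    rw [LinearMap.mem_ker, hγ, LinearMap.comp_apply, Submodule.mkQ_apply,
      Submodule.Quotient.mk_eq_zero, mem_span_int, hSD_iff x]
    constructor
    · rintro ⟨t, ht⟩
      refine ⟨t, ?_⟩
      have := hBdiv_spec x
      rw [ht] at this
      rw [← this, ← hnk]
      ring
    · rintro ⟨t, ht⟩
      refine ⟨t, ?_⟩
      have h1 : Bdiv x * k = ((n / k : ℕ) : ℤ) * t * (k : ℤ) := by
        rw [hBdiv_spec x, ht, ← hnk]; ring
      exact mul_right_cancel₀ hk0 h1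
  have hsurγ : Function.Surjective γ := by
    obtain ⟨x₀, hx₀⟩ : ∃ x₀ : KD, βD x₀ = (k : ℤ) := by
      have : (k : ℤ) ∈ LinearMap.range βD := by
        rw [hβrange]
        exact Submodule.mem_span_singleton_self _
      exact this
    have hBdiv1 : Bdiv x₀ = 1 := by
      have h1 : Bdiv x₀ * k = 1 * k := by rw [hBdiv_spec x₀, hx₀, one_mul]
      exact mul_right_cancel₀ hk0 h1
    intro z
    obtain ⟨c, rfl⟩ := Submodule.mkQ_surjective _ z
    refine ⟨c • x₀, ?_⟩
    rw [hγ, LinearMap.comp_apply, map_smul, hBdiv1, smul_eq_mul, mul_one]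
  -- assemble the cokernel equivalence
  have e3 := Submodule.quotientQuotientEquivQuotient ID SD le_sup_right
  have e4 := quotEquivOfKer SD _ γ hkerγ hsurγ
  have e5 := (Int.quotientSpanNatEquivZMod (n / k)).toAddEquiv
  have Etot : (Hk f₂ ν (f₁ v + 1) ⧸ LinearMap.range φ) ≃+ ZMod (n / k) :=
    ((((Submodule.quotEquivOfEq _ _ hmapSD.symm).trans e3).trans e4).toAddEquiv).trans e5
  refine ⟨φ, hinj, ?_, ?_⟩
  · exact isAddCyclic_of_surjective Etot.symm Etot.symm.surjective
  · rw [Nat.card_congr Etot.toEquiv, Nat.card_zmod]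

end Setup

end PartTwo
end CGLift

/-- Lifting a connected deformable chain graph of rank `n > 0` at a bottom vertex `v` of
degree `q` changes the homology as follows, for some divisor `k` of `n`:
`H_q` gets divided by a cyclic subgroup of order `k`, `H_{q+1}` grows by a cyclic
cokernel of order `n/k`, and all other homology groups are unchanged. -/


theorem homology_of_lifting_at_bottom_vertex
    {V : Type*} [Fintype V] [DecidableEq V] (G : SimpleGraph V)
    (f₁ : V → ℤ) (ν : V → V → ℤ)
    (hchain : IsChainGraph G f₁ ν) (hdef : IsDeformable G ν) (hconn : G.Connected)
    (n : ℕ) (hn : 0 < n) (hrank : ∀ v : V, (∑ w : V, ν w v ^ 2) = (n : ℤ))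
    (v : V) (hv : IsBottomVertex G f₁ v) (q : ℤ) (hq : f₁ v = q) :
    ∃ k : ℕ, 0 < k ∧ k ∣ n ∧
      (∃ C : Submodule ℤ (Hk f₁ ν q), IsAddCyclic C ∧ Nat.card C = k ∧
        Nonempty ((Hk (Function.update f₁ v (f₁ v + 2)) ν q) ≃+ (Hk f₁ ν q ⧸ C))) ∧
      (∃ φ : Hk f₁ ν (q + 1) →ₗ[ℤ] Hk (Function.update f₁ v (f₁ v + 2)) ν (q + 1),
        Function.Injective φ ∧
          IsAddCyclic (Hk (Function.update f₁ v (f₁ v + 2)) ν (q + 1) ⧸ LinearMap.range φ) ∧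
          Nat.card (Hk (Function.update f₁ v (f₁ v + 2)) ν (q + 1) ⧸ LinearMap.range φ)
            = n / k) ∧
      (∀ i : ℤ, i ≠ q → i ≠ q + 1 →
        Nonempty (Hk f₁ ν i ≃+ Hk (Function.update f₁ v (f₁ v + 2)) ν i)) := by
  classical
  obtain ⟨hgrad, ⟨hsym, hadj⟩, hchaincond⟩ := hchain
  subst hq
  set f₂ := Function.update f₁ v (f₁ v + 2) with hf2
  have h2v : f₂ v = f₁ v + 2 := Function.update_self v _ f₁
  have h2ne : ∀ w, w ≠ v → f₂ w = f₁ w := fun w hw => Function.update_of_ne hw _ f₁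
  have vlev : ∀ w, ν v w ≠ 0 → f₁ w = f₁ v + 1 := fun w hw => hv w ((hadj v w).mp hw)
  have S : CGLift.Setup f₁ f₂ ν v n := by
    refine ⟨hsym, vlev, ?_, ?_, ?_, hn, h2v, h2ne⟩
    · rw [← hrank v]
      refine Finset.sum_congr rfl fun u _ => ?_
      rw [hsym v u]; ring
    · intro w hwv hlev
      by_cases hall : ∀ u, ν v u * ν u w = 0
      · exact Finset.sum_eq_zero fun u _ => hall u
      · push_neg at hall
        obtain ⟨u, hu⟩ := hall
        have h1 : ν v u ≠ 0 := fun h => hu (by rw [h, zero_mul])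
        have h2 : ν u w ≠ 0 := fun h => hu (by rw [h, mul_zero])
        have hadj1 : G.Adj v u := (hadj v u).mp h1
        have hadj2 : G.Adj u w := (hadj u w).mp h2
        have hdist : G.dist v w = 2 := by
          have hvw : v ≠ w := fun h => hwv h.symm
          have hnadj : ¬ G.Adj v w := by
            intro h
            rcases hgrad h with h' | h' <;> omega
          have hle : G.dist v w ≤ 2 := by
            have := SimpleGraph.dist_le
              (SimpleGraph.Walk.cons hadj1 (SimpleGraph.Walk.cons hadj2 SimpleGraph.Walk.nil))
            simpa using this
          have hne0 : G.dist v w ≠ 0 := by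
            rw [Ne, SimpleGraph.dist_eq_zero_iff_eq_or_not_reachable]
            push_neg
            exact ⟨hvw, ⟨SimpleGraph.Walk.cons hadj1
              (SimpleGraph.Walk.cons hadj2 SimpleGraph.Walk.nil)⟩⟩
          have hne1 : G.dist v w ≠ 1 := by
            rw [Ne, SimpleGraph.dist_eq_one_iff_adj]
            exact hnadj
          omega
        exact hdef v w hdist
    · intro c hc
      have hcc := hchaincond v c (by omega)
      rw [← hcc]
      refine Finset.sum_congr rfl fun u _ => ?_
      by_cases hu : f₁ u = f₁ v + 1
      · rw [if_pos hu]
      · rw [if_neg hu]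
        have hz : ν v u = 0 := by
          by_contra h
          exact hu (vlev u h)
        rw [hz, zero_mul]
  obtain ⟨C, hcyc, hcard, hequiv⟩ := S.part1
  obtain ⟨φ, hinj, hcyc2, hcard2⟩ := S.part2
  exact ⟨CGLift.kval f₁ ν v, S.kval_pos, S.kval_dvd,
    ⟨C, hcyc, hcard, hequiv⟩, ⟨φ, hinj, hcyc2, hcard2⟩,
    fun i h1 h2 => S.part3 i h1 h2⟩
end

section
/- Let (G,ν) be a connected deformation graph with more than one vertex, with common vertex rank r and volume n (the cardinality of each distance component of a representation gradation), and let A be a representation matrix of (G,ν). Then (det A)² = rⁿ. In particular, if n is odd then r is a perfect square. -/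
/-- If `n` is odd and `r ^ n` is a perfect square, then `r` is a perfect square. -/
lemma sq_of_odd_pow_eq_sq (r n m : ℕ) (hn : Odd n) (h : m ^ 2 = r ^ n) :
    ∃ k : ℕ, r = k ^ 2 := by
  rcases Nat.eq_zero_or_pos r with hr | hr
  · exact ⟨0, by simp [hr]⟩
  obtain ⟨k, hk⟩ := hn
  have hm : m ≠ 0 := by
    intro h0
    subst h0
    simp only [ne_eq, zero_pow, OfNat.ofNat_ne_zero, not_false_iff] at h
    exact absurd h.symm (pow_ne_zero _ hr.ne')
  have key : (r ^ (k + 1)) ^ 2 = r * m ^ 2 := by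
    rw [h, ← pow_mul, hk]; ring
  have hdvd : m ∣ r ^ (k + 1) := by
    rw [← Nat.pow_dvd_pow_iff (two_ne_zero), key]
    exact dvd_mul_left _ _
  obtain ⟨t, ht⟩ := hdvd
  refine ⟨t, ?_⟩
  have h5 : m ^ 2 * t ^ 2 = m ^ 2 * r := by
    rw [← mul_pow, ← ht, key, mul_comm]
  exact (Nat.eq_of_mul_eq_mul_left (Nat.pos_of_ne_zero (pow_ne_zero 2 hm)) h5).symm

/-- For a connected deformation graph of rank `r` and volume `n`, any representation
matrix `A` satisfies `(det A)² = rⁿ`; in particular if `n` is odd then `r` is a perfect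
square. -/
theorem det_representation_matrix_sq_eq_rank_pow_volume
    {V : Type*} [Fintype V] [DecidableEq V] (G : SimpleGraph V) (ν : V → V → ℤ)
    (hcon : IsConnection G ν) (hdef : IsDeformable G ν)
    (hconn : G.Connected) (hcard : 1 < Fintype.card V)
    (r n : ℕ) (hrank : ∀ v : V, (∑ w : V, ν w v ^ 2) = (r : ℤ))
    (g : V → ℤ) (hg : IsGradation G g) (hg01 : ∀ v : V, g v = 0 ∨ g v = 1)
    (hn : Fintype.card {v : V // g v = 0} = n)
    (e : {v : V // g v = 0} ≃ {v : V // g v = 1}) :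
    (Matrix.det (Matrix.of fun (v w : {v : V // g v = 0}) => ν v.1 (e w).1)) ^ 2
        = (r : ℤ) ^ n ∧
      (Odd n → ∃ m : ℕ, r = m ^ 2) := by
  obtain ⟨hsymm, hadj⟩ := hcon
  set A : Matrix {v : V // g v = 0} {v : V // g v = 0} ℤ :=
    Matrix.of fun (v w : {v : V // g v = 0}) => ν v.1 (e w).1 with hA
  -- terms with g c = 0 vanish in ∑ c, ν v c * ν c v' for g v = 0
  have hvanish : ∀ (v v' : V), g v = 0 → g v' = 0 →
      (∑ c : {c : V // g c = 1}, ν v c.1 * ν c.1 v') = ∑ c : V, ν v c * ν c v' := by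
    intro v v' hv hv'
    classical
    rw [← Finset.sum_subtype (Finset.univ.filter (fun c => g c = 1))
      (fun x => by simp) (fun c => ν v c * ν c v')]
    rw [Finset.sum_filter_of_ne]
    intro c _ hc
    have h1 : ν v c ≠ 0 := fun h0 => hc (by rw [h0, zero_mul])
    have hadjvc := (hadj v c).mp h1
    rcases hg hadjvc with h | h <;> rcases hg01 c with h2 | h2 <;> omega
  have hlhs : ∀ v v' : {v : V // g v = 0},
      (A * A.transpose) v v' = ∑ c : V, ν v.1 c * ν c v'.1 := by
    intro v v'
    simp only [Matrix.mul_apply, Matrix.transpose_apply, hA, Matrix.of_apply]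
    rw [Fintype.sum_equiv e _ (fun c : {c : V // g c = 1} => ν v.1 c.1 * ν v'.1 c.1)
      (fun w => rfl), ← hvanish v.1 v'.1 v.2 v'.2]
    exact Finset.sum_congr rfl fun c _ => by rw [hsymm c v'.1]
  -- A * Aᵀ = r • 1
  have hkey : A * A.transpose = (r : ℤ) • 1 := by
    ext v v'
    rw [hlhs v v', Matrix.smul_apply, smul_eq_mul]
    by_cases hvv : v = v'
    · subst hvv
      rw [Matrix.one_apply_eq, mul_one, ← hrank v.1]
      exact Finset.sum_congr rfl fun c _ => by rw [hsymm v.1 c]; ring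
    · rw [Matrix.one_apply_ne hvv, mul_zero]
      by_cases hall : ∀ c : V, ν v.1 c * ν c v'.1 = 0
      · exact Finset.sum_eq_zero fun c _ => hall c
      · push_neg at hall
        obtain ⟨c, hc⟩ := hall
        have h1 : G.Adj v.1 c := (hadj _ _).mp fun h0 => hc (by rw [h0, zero_mul])
        have h2 : G.Adj c v'.1 := (hadj _ _).mp fun h0 => hc (by rw [h0, mul_zero])
        have hne : v.1 ≠ v'.1 := fun h => hvv (Subtype.ext h)
        have hnadj : ¬ G.Adj v.1 v'.1 := by
          intro h
          rcases hg h with h3 | h3 <;> omega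
        have hd2 : G.dist v.1 v'.1 = 2 := by
          have hle : G.dist v.1 v'.1 ≤ 2 :=
            SimpleGraph.dist_le (h1.toWalk.append h2.toWalk)
          have h0 : G.dist v.1 v'.1 ≠ 0 := fun h =>
            hne (hconn.dist_eq_zero_iff.mp h)
          have h1' : G.dist v.1 v'.1 ≠ 1 := fun h =>
            hnadj (SimpleGraph.dist_eq_one_iff_adj.mp h)
          omega
        exact hdef v.1 v'.1 hd2
  have hdet : (A.det) ^ 2 = (r : ℤ) ^ n := by
    have := congrArg Matrix.det hkey
    rwa [Matrix.det_mul, Matrix.det_transpose, ← pow_two, Matrix.det_smul,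
      Matrix.det_one, mul_one, hn] at this
  refine ⟨hdet, fun hodd => ?_⟩
  have hnat : (A.det.natAbs) ^ 2 = r ^ n := by
    have h6 : (A.det ^ 2).natAbs = ((r : ℤ) ^ n).natAbs := congrArg Int.natAbs hdet
    simpa [Int.natAbs_pow] using h6
  exact sq_of_odd_pow_eq_sq r n _ hodd hnat
end

section
/- Let G be a finite connected diamond graph. Then G is regular: all vertices of G have the same number of neighbors. This common number is called the rank of G. -/
/-- A diamond graph: whenever `a-b-c` is a path with `a ≠ c`, there is exactly one
further vertex `d ∉ {a,b,c}` adjacent to both `a` and `c`, with `a` not adjacent to `c`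
and `b` not adjacent to `d`. -/
def IsDiamondGraph {V : Type*} (G : SimpleGraph V) : Prop :=
  ∀ a b c : V, a ≠ c → G.Adj a b → G.Adj b c →
    ∃! d : V, d ≠ a ∧ d ≠ b ∧ d ≠ c ∧ G.Adj d a ∧ G.Adj d c ∧
      ¬ G.Adj a c ∧ ¬ G.Adj b d

open Classical in
noncomputable def diamondMap {V : Type*} (G : SimpleGraph V) (hd : IsDiamondGraph G)
    {a b : V} (hab : G.Adj a b) : {w : V // G.Adj a w} → {w : V // G.Adj b w} :=
  fun c => if h : (c : V) = b then ⟨a, hab.symm⟩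
    else ⟨Classical.choose (hd c a b h c.2.symm hab),
      (Classical.choose_spec (hd c a b h c.2.symm hab)).1.2.2.2.2.1.symm⟩

lemma diamondMap_leftInv {V : Type*} (G : SimpleGraph V) (hd : IsDiamondGraph G)
    {a b : V} (hab : G.Adj a b) :
    Function.LeftInverse (diamondMap G hd hab.symm) (diamondMap G hd hab) := by
  rintro ⟨c, hc⟩
  by_cases h : c = b
  · subst h
    simp only [diamondMap, dif_pos]
  · have E := hd c a b h hc.symm hab
    obtain ⟨⟨hdc, hda, hdb, hAdc, hAdb, hncb, hnad⟩, -⟩ := Classical.choose_spec E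
    have step1 : diamondMap G hd hab ⟨c, hc⟩ = ⟨Classical.choose E, hAdb.symm⟩ := by
      simp only [diamondMap]
      exact dif_neg h
    rw [step1]
    have E' := hd (Classical.choose E) b a hda hAdb hab.symm
    have hceq : c = Classical.choose E' :=
      (Classical.choose_spec E').2 c ⟨Ne.symm hdc, h, fun hca => (G.ne_of_adj hc) hca.symm,
        hAdc.symm, hc.symm, fun had => hnad had.symm, fun hbc => hncb hbc.symm⟩
    have step2 : diamondMap G hd hab.symm ⟨Classical.choose E, hAdb.symm⟩
        = ⟨Classical.choose E', (Classical.choose_spec E').1.2.2.2.2.1.symm⟩ := by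
      simp only [diamondMap]
      exact dif_neg hda
    rw [step2]
    exact Subtype.ext hceq.symm

lemma diamond_card_adj {V : Type*} (G : SimpleGraph V) (hd : IsDiamondGraph G)
    {a b : V} (hab : G.Adj a b) :
    Nat.card {w : V // G.Adj a w} = Nat.card {w : V // G.Adj b w} :=
  Nat.card_congr
    ⟨diamondMap G hd hab, diamondMap G hd hab.symm,
      diamondMap_leftInv G hd hab, diamondMap_leftInv G hd hab.symm⟩

/-- A finite connected diamond graph is regular: all vertices have the same number of
neighbors. -/
theorem diamond_graph_regular
    {V : Type*} [Fintype V] (G : SimpleGraph V)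
    (hdiamond : IsDiamondGraph G) (hconn : G.Connected) :
    ∀ u v : V, Nat.card {w : V // G.Adj u w} = Nat.card {w : V // G.Adj v w} := by
  intro u v
  obtain ⟨p⟩ := hconn.preconnected u v
  induction p with
  | nil => rfl
  | cons h _ ih => exact (diamond_card_adj G hdiamond h).trans ih
end

section
/- For every n ≥ 1, the transpose map a ↦ aᵀ defined by (aᵀ)_{i,j} = a_{n−j,n−i} is an adjacency-preserving bijection of G_n, and for every weight (i_0,…,i_n) it restricts to a graph isomorphism from the weight subgraph G(i_0, i_1, …, i_{n−1}, i_n) onto G(n−i_n, n−i_{n−1}, …, n−i_1, n−i_0). -/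
/-- `UT n`: strictly upper triangular 0-1 arrays `(a_{i,j})_{0 ≤ i < j ≤ n}`,
encoded as functions on `Fin (n+1) × Fin (n+1)` vanishing off the region `i < j`. -/
def UT (n : ℕ) : Type :=
  {a : Fin (n + 1) → Fin (n + 1) → ℤ //
    ∀ i j : Fin (n + 1), (i < j → a i j = 0 ∨ a i j = 1) ∧ (¬ i < j → a i j = 0)}

/-- Adjacency in `G_n`: `a` and `b` differ exactly on a triple of positions
`(i,j), (j,l), (i,l)` with `i < j < l`, where one of them has entries `1, 1, 0` and
the other `0, 0, 1`. -/
def UTAdj {n : ℕ} (a b : UT n) : Prop :=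
  ∃ i j l : Fin (n + 1), i < j ∧ j < l ∧
    ((a.1 i j = 1 ∧ a.1 j l = 1 ∧ a.1 i l = 0 ∧
        b.1 i j = 0 ∧ b.1 j l = 0 ∧ b.1 i l = 1) ∨
      (b.1 i j = 1 ∧ b.1 j l = 1 ∧ b.1 i l = 0 ∧
        a.1 i j = 0 ∧ a.1 j l = 0 ∧ a.1 i l = 1)) ∧
    ∀ s t : Fin (n + 1),
      ¬ ((s = i ∧ t = j) ∨ (s = j ∧ t = l) ∨ (s = i ∧ t = l)) → a.1 s t = b.1 s t

/-- The weight of an array: `w_s(a) = ∑_{k<s} (1 - a_{k,s}) + ∑_{k>s} a_{s,k}`. -/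
def UTweight {n : ℕ} (a : UT n) : Fin (n + 1) → ℤ := fun s =>
  (∑ k : Fin (n + 1), if k < s then 1 - a.1 k s else 0) +
    ∑ k : Fin (n + 1), if s < k then a.1 s k else 0

/-- The transpose map `(aᵀ)_{i,j} = a_{n-j,n-i}`. -/
def UTtrans {n : ℕ} (a : UT n) : UT n :=
  ⟨fun i j => a.1 j.rev i.rev, by
    intro i j
    constructor
    · intro hij
      exact (a.2 j.rev i.rev).1 (Fin.rev_lt_rev.2 hij)
    · intro hij
      exact (a.2 j.rev i.rev).2 (fun h => hij (Fin.rev_lt_rev.1 h))⟩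


lemma UTtrans_invol {n : ℕ} : Function.Involutive (UTtrans (n := n)) := by
  intro a
  apply Subtype.ext
  funext i j
  simp [UTtrans, Fin.rev_rev]

lemma UTAdj_trans {n : ℕ} {a b : UT n} (h : UTAdj a b) :
    UTAdj (UTtrans a) (UTtrans b) := by
  obtain ⟨i, j, l, hij, hjl, hmid, hrest⟩ := h
  refine ⟨l.rev, j.rev, i.rev, Fin.rev_lt_rev.2 hjl, Fin.rev_lt_rev.2 hij, ?_, ?_⟩
  · simp only [UTtrans, Fin.rev_rev]
    rcases hmid with ⟨h1, h2, h3, h4, h5, h6⟩ | ⟨h1, h2, h3, h4, h5, h6⟩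
    · exact Or.inl ⟨h2, h1, h3, h5, h4, h6⟩
    · exact Or.inr ⟨h2, h1, h3, h5, h4, h6⟩
  · intro s t hst
    apply hrest t.rev s.rev
    rintro (⟨h1, h2⟩ | ⟨h1, h2⟩ | ⟨h1, h2⟩) <;> apply hst
    · exact Or.inr (Or.inl ⟨by rw [← h2, Fin.rev_rev], by rw [← h1, Fin.rev_rev]⟩)
    · exact Or.inl ⟨by rw [← h2, Fin.rev_rev], by rw [← h1, Fin.rev_rev]⟩
    · exact Or.inr (Or.inr ⟨by rw [← h2, Fin.rev_rev], by rw [← h1, Fin.rev_rev]⟩)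

/-- The transpose map is an adjacency-preserving bijection of `G_n` sending the weight
subgraph `G(i_0, …, i_n)` onto `G(n - i_n, …, n - i_0)`. -/
theorem UTtrans_bijective_adjacency_weight (n : ℕ) (hn : 1 ≤ n) :
    Function.Bijective (UTtrans (n := n)) ∧
    (∀ a b : UT n, UTAdj a b ↔ UTAdj (UTtrans a) (UTtrans b)) ∧
    (∀ a : UT n, ∀ s : Fin (n + 1),
      UTweight (UTtrans a) s = (n : ℤ) - UTweight a s.rev) := by
  refine ⟨UTtrans_invol.bijective, fun a b => ⟨UTAdj_trans, fun h => ?_⟩, fun a s => ?_⟩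
  · have := UTAdj_trans h
    rwa [UTtrans_invol a, UTtrans_invol b] at this
  · unfold UTweight
    simp only [UTtrans]
    set t := s.rev with ht
    have e1 : (∑ k : Fin (n + 1), if k < s then 1 - a.1 s.rev k.rev else 0) =
        ∑ k : Fin (n + 1), if t < k then 1 - a.1 t k else 0 := by
      apply Fintype.sum_bijective Fin.rev Fin.rev_involutive.bijective
      intro k
      have : k < s ↔ s.rev < k.rev := Iff.symm Fin.rev_lt_rev
      simp only [ht, Fin.rev_rev]
      split_ifs with h1 h2 h2
      · rfl
      · exact absurd (this.1 h1) h2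
      · exact absurd (this.2 h2) h1
      · rfl
    have e2 : (∑ k : Fin (n + 1), if s < k then a.1 k.rev s.rev else 0) =
        ∑ k : Fin (n + 1), if k < t then a.1 k t else 0 := by
      apply Fintype.sum_bijective Fin.rev Fin.rev_involutive.bijective
      intro k
      have : s < k ↔ k.rev < s.rev := Iff.symm Fin.rev_lt_rev
      simp only [ht, Fin.rev_rev]
      split_ifs with h1 h2 h2
      · rfl
      · exact absurd (this.1 h1) h2
      · exact absurd (this.2 h2) h1
      · rfl
    rw [e1, e2]
    have H1 : (∑ k : Fin (n + 1), if t < k then 1 - a.1 t k else 0) +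
        (∑ k : Fin (n + 1), if t < k then a.1 t k else 0) =
        ∑ k : Fin (n + 1), if t < k then (1 : ℤ) else 0 := by
      rw [← Finset.sum_add_distrib]
      exact Finset.sum_congr rfl fun k _ => by split_ifs <;> ring
    have H2 : (∑ k : Fin (n + 1), if k < t then a.1 k t else 0) +
        (∑ k : Fin (n + 1), if k < t then 1 - a.1 k t else 0) =
        ∑ k : Fin (n + 1), if k < t then (1 : ℤ) else 0 := by
      rw [← Finset.sum_add_distrib]
      exact Finset.sum_congr rfl fun k _ => by split_ifs <;> ring
    have H3 : (∑ k : Fin (n + 1), if t < k then (1 : ℤ) else 0) +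
        (∑ k : Fin (n + 1), if k < t then (1 : ℤ) else 0) = (n : ℤ) := by
      rw [← Finset.sum_add_distrib]
      have : ∀ k : Fin (n + 1),
          ((if t < k then (1 : ℤ) else 0) + (if k < t then (1 : ℤ) else 0)) =
          1 - (if k = t then (1 : ℤ) else 0) := by
        intro k
        rcases lt_trichotomy k t with h | h | h
        · simp [h, asymm h, h.ne]
        · simp [h]
        · simp [h, asymm h, h.ne']
      rw [Finset.sum_congr rfl fun k _ => this k, Finset.sum_sub_distrib,
        Finset.sum_ite_eq' Finset.univ t (fun _ => (1 : ℤ))]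
      simp
    linarith [H1, H2, H3]
end
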